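/- arXiv:2509.01761 — 10 statements merged into one kernel-verified Lean document; each statement's English description precedes it below -/
import Mathlib

section
/- In the block decomposition of Θ(J), for every r ≥ 0 the block C_r is upper triangular and the block A_r is lower triangular with diagonal entries (A_r)_{s,s} = α_m · a_{mr+s} · a_{mr+s+1} ⋯ a_{m(r+1)+s-1} (the product of the m consecutive coefficients a_{mr+s}, ..., a_{mr+s+m-1}, multiplied by α_m); in particular each A_r is invertible. -/
/-- The semi-infinite tridiagonal Jacobi matrix with diagonal `b`, superdiagonal `a`
and subdiagonal `c` (`J_{n+1,n} = c_{n+1}`). -/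
noncomputable def jacobiMat (a b c : ℕ → ℝ) : ℕ → ℕ → ℝ := fun i j =>
  if i = j then b i
  else if j = i + 1 then a i
  else if i = j + 1 then c i
  else 0

/-- Entrywise powers of a banded semi-infinite matrix, defined by the recursion
`(J^{r+1})_{i,j} = Σ_{l : |l-j| ≤ 1} (J^r)_{i,l} J_{l,j}`. -/
noncomputable def jacobiPow (J : ℕ → ℕ → ℝ) : ℕ → ℕ → ℕ → ℝ
  | 0 => fun i j => if i = j then 1 else 0
  | r + 1 => fun i j => ∑ l ∈ Finset.Icc (j - 1) (j + 1), jacobiPow J r i l * J l j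

lemma jacobiPow_hi (J : ℕ → ℕ → ℝ) :
    ∀ k i j, i + k < j → jacobiPow J k i j = 0 := by
  intro k
  induction k with
  | zero => intro i j h; simp only [jacobiPow]; rw [if_neg (by omega)]
  | succ k ih =>
    intro i j h
    rw [jacobiPow]
    apply Finset.sum_eq_zero
    intro l hl
    simp only [Finset.mem_Icc] at hl
    rw [ih i l (by omega), zero_mul]

lemma jacobiPow_lo (J : ℕ → ℕ → ℝ) :
    ∀ k i j, j + k < i → jacobiPow J k i j = 0 := by
  intro k
  induction k with
  | zero => intro i j h; simp only [jacobiPow]; rw [if_neg (by omega)]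
  | succ k ih =>
    intro i j h
    rw [jacobiPow]
    apply Finset.sum_eq_zero
    intro l hl
    simp only [Finset.mem_Icc] at hl
    rw [ih i l (by omega), zero_mul]

lemma jacobiPow_diag (a b c : ℕ → ℝ) :
    ∀ k i, jacobiPow (jacobiMat a b c) k i (i + k)
      = ∏ u ∈ Finset.range k, a (i + u) := by
  intro k
  induction k with
  | zero => intro i; simp [jacobiPow]
  | succ k ih =>
    intro i
    rw [jacobiPow]
    beta_reduce
    rw [Finset.sum_eq_single_of_mem (i + k)
      (by simp [Finset.mem_Icc]; omega)
      (by intro l hl hne; simp only [Finset.mem_Icc] at hl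
          rcases Nat.lt_or_ge l (i + k) with h | h
          · rw [jacobiPow_lo _ _ _ _ (by omega), zero_mul]
          · rw [jacobiPow_hi _ _ _ _ (by omega), zero_mul])]
    rw [ih]
    have : jacobiMat a b c (i + k) (i + (k + 1)) = a (i + k) := by
      unfold jacobiMat
      rw [if_neg (by omega), if_pos (by omega)]
    rw [this, Finset.prod_range_succ]

/-- The matrix `Θ(J) = Σ_{k=0}^m α_k J^k`. -/
noncomputable def thetaOfJ (α : ℕ → ℝ) (m : ℕ) (J : ℕ → ℕ → ℝ) : ℕ → ℕ → ℝ :=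
  fun i j => ∑ k ∈ Finset.range (m + 1), α k * jacobiPow J k i j

/-- The `m × m` block `A_r` of `Θ(J)`: `(A_r)_{s,t} = Θ(J)_{mr+s, m(r+1)+t}`. -/
noncomputable def blockA (α : ℕ → ℝ) (m : ℕ) (J : ℕ → ℕ → ℝ) (r : ℕ) :
    Matrix (Fin m) (Fin m) ℝ :=
  fun s t => thetaOfJ α m J (m * r + s) (m * (r + 1) + t)

/-- The `m × m` block `B_r` of `Θ(J)`: `(B_r)_{s,t} = Θ(J)_{mr+s, mr+t}`. -/
noncomputable def blockB (α : ℕ → ℝ) (m : ℕ) (J : ℕ → ℕ → ℝ) (r : ℕ) :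
    Matrix (Fin m) (Fin m) ℝ :=
  fun s t => thetaOfJ α m J (m * r + s) (m * r + t)

/-- The `m × m` block `C_r` of `Θ(J)`: `(C_r)_{s,t} = Θ(J)_{mr+s, m(r-1)+t}`, with `C_0 = 0`. -/
noncomputable def blockC (α : ℕ → ℝ) (m : ℕ) (J : ℕ → ℕ → ℝ) (r : ℕ) :
    Matrix (Fin m) (Fin m) ℝ :=
  fun s t => if r = 0 then 0 else thetaOfJ α m J (m * r + s) (m * (r - 1) + t)

/-- `C_r` is upper triangular, `A_r` is lower triangular with diagonal
entries `(A_r)_{s,s} = α_m ∏_{u=0}^{m-1} a_{mr+s+u}`; in particular `A_r` is invertible. -/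
theorem blockC_upper_blockA_lower_invertible
    (a b : ℕ → ℝ) (c : ℕ → ℝ) (ha : ∀ n, 0 < a n)
    (m : ℕ) (hm : 1 ≤ m) (α : ℕ → ℝ) (hα : α m ≠ 0) (r : ℕ) :
    (∀ s t : Fin m, (t : ℕ) < (s : ℕ) → blockC α m (jacobiMat a b c) r s t = 0)
    ∧ (∀ s t : Fin m, (s : ℕ) < (t : ℕ) → blockA α m (jacobiMat a b c) r s t = 0)
    ∧ (∀ s : Fin m,
        blockA α m (jacobiMat a b c) r s s
          = α m * ∏ u ∈ Finset.range m, a (m * r + (s : ℕ) + u))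
    ∧ IsUnit (blockA α m (jacobiMat a b c) r) := by

  have hC : ∀ s t : Fin m, (t : ℕ) < (s : ℕ) →
      blockC α m (jacobiMat a b c) r s t = 0 := by
    intro s t hts
    unfold blockC
    rcases Nat.eq_zero_or_pos r with hr | hr
    · rw [if_pos hr]
    · rw [if_neg (by omega)]
      unfold thetaOfJ
      apply Finset.sum_eq_zero
      intro k hk
      simp only [Finset.mem_range] at hk
      rw [jacobiPow_lo _ _ _ _ (by
        have : m * r = m * (r - 1) + m := by
          have : r - 1 + 1 = r := by omega
          calc m * r = m * (r - 1 + 1) := by rw [this]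
          _ = m * (r - 1) + m := by ring
        omega), mul_zero]
  have hAlow : ∀ s t : Fin m, (s : ℕ) < (t : ℕ) →
      blockA α m (jacobiMat a b c) r s t = 0 := by
    intro s t hst
    unfold blockA thetaOfJ
    apply Finset.sum_eq_zero
    intro k hk
    simp only [Finset.mem_range] at hk
    rw [jacobiPow_hi _ _ _ _ (by
      have : m * (r + 1) = m * r + m := by ring
      omega), mul_zero]
  have hAdiag : ∀ s : Fin m,
      blockA α m (jacobiMat a b c) r s s
        = α m * ∏ u ∈ Finset.range m, a (m * r + (s : ℕ) + u) := by
    intro s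
    unfold blockA thetaOfJ
    rw [Finset.sum_eq_single_of_mem m (by simp)
      (by intro k hk hkm
          simp only [Finset.mem_range] at hk
          rw [jacobiPow_hi _ _ _ _ (by
            have : m * (r + 1) = m * r + m := by ring
            omega), mul_zero])]
    have hidx : m * (r + 1) + (s : ℕ) = (m * r + (s : ℕ)) + m := by ring
    rw [hidx, jacobiPow_diag]
  refine ⟨hC, hAlow, hAdiag, ?_⟩
  rw [Matrix.isUnit_iff_isUnit_det]
  have hdet : (blockA α m (jacobiMat a b c) r).det
      = ∏ s : Fin m, blockA α m (jacobiMat a b c) r s s := by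
    apply Matrix.det_of_lowerTriangular
    intro i j hij
    exact hAlow i j hij
  rw [hdet]
  apply isUnit_iff_ne_zero.2
  apply Finset.prod_ne_zero_iff.2
  intro s _
  rw [hAdiag s]
  exact mul_ne_zero hα (Finset.prod_ne_zero_iff.2 fun u _ => (ha _).ne')
end

section
/- The vector polynomials 𝐩_r satisfy the block three-term recurrence Θ(x)·𝐩_r(x) = A_r·𝐩_{r+1}(x) + B_r·𝐩_r(x) + C_r·𝐩_{r-1}(x) for all r ≥ 0 (with 𝐩_{-1} = 0), as an identity of vectors of real polynomials. -/
open Finset Polynomial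

lemma jacobiMat_eq_zero (a b c : ℕ → ℝ) {l j : ℕ} (h : l + 1 < j ∨ j + 1 < l) :
    jacobiMat a b c l j = 0 := by
  unfold jacobiMat
  rw [if_neg (by omega), if_neg (by omega), if_neg (by omega)]

lemma jacobiPow_band (J : ℕ → ℕ → ℝ) (hJ : ∀ l j, l + 1 < j ∨ j + 1 < l → J l j = 0)
    (k : ℕ) : ∀ i j, (i + k < j ∨ j + k < i) → jacobiPow J k i j = 0 := by
  induction k with
  | zero => intro i j h; simp only [jacobiPow]; rw [if_neg (by omega)]
  | succ k ih =>
    intro i j h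
    simp only [jacobiPow]
    apply Finset.sum_eq_zero
    intro l hl
    simp only [Finset.mem_Icc] at hl
    rcases h with h | h
    · rw [ih i l (Or.inl (by omega))]; ring
    · rw [ih i l (Or.inr (by omega))]; ring

lemma jacobi_swap {M : Type*} [AddCommMonoid M] (N : ℕ) (g : ℕ → ℕ → M)
    (hg : ∀ l j, N ≤ l → g l j = 0) (hg2 : ∀ l j, N ≤ j → g l j = 0) :
    ∑ l ∈ range N, ∑ j ∈ Icc (l - 1) (l + 1), g l j
      = ∑ j ∈ range N, ∑ l ∈ Icc (j - 1) (j + 1), g l j := by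
  have A : ∀ (f : ℕ → M) (t : ℕ), (∀ u, N ≤ u → f u = 0) →
      ∑ u ∈ Icc (t - 1) (t + 1), f u
        = ∑ u ∈ range N, if u ∈ Icc (t - 1) (t + 1) then f u else 0 := by
    intro f t hf
    rw [Finset.sum_ite_mem]
    refine (Finset.sum_subset Finset.inter_subset_right ?_).symm
    intro u hu hnu
    refine hf u ?_
    by_contra hlt
    exact hnu (Finset.mem_inter.mpr ⟨Finset.mem_range.mpr (by omega), hu⟩)
  calc ∑ l ∈ range N, ∑ j ∈ Icc (l - 1) (l + 1), g l j
      = ∑ l ∈ range N, ∑ j ∈ range N, if j ∈ Icc (l - 1) (l + 1) then g l j else 0 :=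
        Finset.sum_congr rfl fun l _ => A (g l) l (fun u hu => hg2 l u hu)
    _ = ∑ j ∈ range N, ∑ l ∈ range N, if j ∈ Icc (l - 1) (l + 1) then g l j else 0 :=
        Finset.sum_comm
    _ = ∑ j ∈ range N, ∑ l ∈ range N, if l ∈ Icc (j - 1) (j + 1) then g l j else 0 := by
        refine Finset.sum_congr rfl fun j _ => Finset.sum_congr rfl fun l _ => ?_
        by_cases h : j ∈ Icc (l - 1) (l + 1)
        · rw [if_pos h, if_pos (by simp only [Finset.mem_Icc] at h ⊢; omega)]
        · rw [if_neg h, if_neg (by simp only [Finset.mem_Icc] at h ⊢; omega)]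
    _ = ∑ j ∈ range N, ∑ l ∈ Icc (j - 1) (j + 1), g l j :=
        Finset.sum_congr rfl fun j _ => (A (fun l => g l j) j (fun u hu => hg u j hu)).symm

lemma jacobi_step (a b c : ℕ → ℝ) (p : ℕ → Polynomial ℝ)
    (hprec0 : X * p 0 = C (a 0) * p 1 + C (b 0) * p 0)
    (hprec : ∀ n, 1 ≤ n → X * p n = C (a n) * p (n + 1) + C (b n) * p n + C (c n) * p (n - 1))
    (l : ℕ) :
    X * p l = ∑ j ∈ Icc (l - 1) (l + 1), C (jacobiMat a b c l j) * p j := by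
  match l with
  | 0 =>
    rw [show (0 : ℕ) - 1 = 0 from rfl]
    rw [Finset.sum_Icc_succ_top (by omega), Finset.Icc_self, Finset.sum_singleton]
    rw [show jacobiMat a b c 0 0 = b 0 from by simp [jacobiMat],
        show jacobiMat a b c 0 1 = a 0 from by simp [jacobiMat]]
    rw [hprec0]; ring
  | n + 1 =>
    rw [show n + 1 - 1 = n from rfl]
    rw [Finset.sum_Icc_succ_top (by omega), Finset.sum_Icc_succ_top (by omega),
        Finset.Icc_self, Finset.sum_singleton]
    rw [show jacobiMat a b c (n + 1) n = c (n + 1) from by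
          unfold jacobiMat; rw [if_neg (by omega), if_neg (by omega), if_pos rfl],
        show jacobiMat a b c (n + 1) (n + 1) = b (n + 1) from by simp [jacobiMat],
        show jacobiMat a b c (n + 1) (n + 2) = a (n + 1) from by
          unfold jacobiMat; rw [if_neg (by omega), if_pos rfl]]
    rw [hprec (n + 1) (by omega)]
    simp only [Nat.add_sub_cancel]
    ring

lemma jacobi_key (a b c : ℕ → ℝ) (p : ℕ → Polynomial ℝ)
    (hprec0 : X * p 0 = C (a 0) * p 1 + C (b 0) * p 0)
    (hprec : ∀ n, 1 ≤ n → X * p n = C (a n) * p (n + 1) + C (b n) * p n + C (c n) * p (n - 1))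
    (k : ℕ) : ∀ i, X ^ k * p i
      = ∑ j ∈ range (i + k + 1), C (jacobiPow (jacobiMat a b c) k i j) * p j := by
  have hJ0 : ∀ l j, l + 1 < j ∨ j + 1 < l → jacobiMat a b c l j = 0 :=
    fun l j h => jacobiMat_eq_zero a b c h
  induction k with
  | zero =>
    intro i
    rw [pow_zero, one_mul]
    rw [Finset.sum_eq_single i]
    · simp [jacobiPow]
    · intro j hj hne
      simp only [jacobiPow]
      rw [if_neg (fun h => hne h.symm), map_zero, zero_mul]
    · intro h; exact absurd (Finset.self_mem_range_succ i) h
  | succ k ih =>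
    intro i
    have hX : X ^ (k + 1) * p i = X * (X ^ k * p i) := by ring
    rw [hX, ih i, Finset.mul_sum]
    have h2 : ∀ l ∈ range (i + k + 1), X * (C (jacobiPow (jacobiMat a b c) k i l) * p l)
        = ∑ j ∈ Icc (l - 1) (l + 1),
            C (jacobiPow (jacobiMat a b c) k i l * jacobiMat a b c l j) * p j := by
      intro l _
      rw [show X * (C (jacobiPow (jacobiMat a b c) k i l) * p l)
          = C (jacobiPow (jacobiMat a b c) k i l) * (X * p l) by ring,
        jacobi_step a b c p hprec0 hprec l, Finset.mul_sum]
      exact Finset.sum_congr rfl fun j _ => by rw [map_mul]; ring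
    rw [Finset.sum_congr rfl h2]
    have hpad : ∑ l ∈ range (i + k + 2), ∑ j ∈ Icc (l - 1) (l + 1),
          C (jacobiPow (jacobiMat a b c) k i l * jacobiMat a b c l j) * p j
        = ∑ l ∈ range (i + k + 1), ∑ j ∈ Icc (l - 1) (l + 1),
          C (jacobiPow (jacobiMat a b c) k i l * jacobiMat a b c l j) * p j := by
      rw [show i + k + 2 = (i + k + 1) + 1 from rfl, Finset.sum_range_succ]
      have hz : ∑ j ∈ Icc (i + k + 1 - 1) (i + k + 1 + 1),
          C (jacobiPow (jacobiMat a b c) k i (i + k + 1) * jacobiMat a b c (i + k + 1) j) * p j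
          = 0 :=
        Finset.sum_eq_zero (fun j _ => by
          rw [jacobiPow_band _ hJ0 k i (i + k + 1) (Or.inl (by omega)), zero_mul,
            map_zero, zero_mul])
      rw [hz, add_zero]
    rw [← hpad]
    rw [jacobi_swap (i + k + 2)
      (fun l j => C (jacobiPow (jacobiMat a b c) k i l * jacobiMat a b c l j) * p j)
      (fun l j hl => by
        show C (jacobiPow (jacobiMat a b c) k i l * jacobiMat a b c l j) * p j = 0
        rw [jacobiPow_band _ hJ0 k i l (Or.inl (by omega)), zero_mul, map_zero, zero_mul])
      (fun l j hj => by
        show C (jacobiPow (jacobiMat a b c) k i l * jacobiMat a b c l j) * p j = 0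
        rcases le_or_gt l (j - 2) with h | h
        · rw [hJ0 l j (Or.inl (by omega)), mul_zero, map_zero, zero_mul]
        · rw [jacobiPow_band _ hJ0 k i l (Or.inl (by omega)), zero_mul, map_zero, zero_mul])]
    refine Finset.sum_congr rfl fun j _ => ?_
    simp only [jacobiPow]
    rw [map_sum, Finset.sum_mul]

/-- the vector polynomials `𝐩_r(x) = (p_{mr}(x),…,p_{mr+m-1}(x))ᵀ`
satisfy the block three-term recurrence
`Θ(x)·𝐩_r(x) = A_r 𝐩_{r+1}(x) + B_r 𝐩_r(x) + C_r 𝐩_{r-1}(x)` (with `𝐩_{-1} = 0`,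
which is subsumed by `C_0 = 0`), as an identity of vectors of real polynomials. -/
theorem vector_polys_block_three_term_recurrence
    (a b : ℕ → ℝ) (c : ℕ → ℝ) (ha : ∀ n, 0 < a n)
    (p : ℕ → Polynomial ℝ) (hp0 : p 0 = 1)
    (hprec0 : Polynomial.X * p 0 = Polynomial.C (a 0) * p 1 + Polynomial.C (b 0) * p 0)
    (hprec : ∀ n, 1 ≤ n →
      Polynomial.X * p n
        = Polynomial.C (a n) * p (n + 1) + Polynomial.C (b n) * p n
          + Polynomial.C (c n) * p (n - 1))
    (m : ℕ) (hm : 1 ≤ m) (α : ℕ → ℝ) (hα : α m ≠ 0)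
    (r : ℕ) (s : Fin m) :
    (∑ k ∈ Finset.range (m + 1), Polynomial.C (α k) * Polynomial.X ^ k) * p (m * r + s)
      = (∑ t : Fin m,
          Polynomial.C (blockA α m (jacobiMat a b c) r s t) * p (m * (r + 1) + t))
        + (∑ t : Fin m,
          Polynomial.C (blockB α m (jacobiMat a b c) r s t) * p (m * r + t))
        + (∑ t : Fin m,
          Polynomial.C (blockC α m (jacobiMat a b c) r s t) * p (m * (r - 1) + t)) := by
  classical
  have hJ0 : ∀ l j, l + 1 < j ∨ j + 1 < l → jacobiMat a b c l j = 0 :=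
    fun l j h => jacobiMat_eq_zero a b c h
  set J := jacobiMat a b c with hJdef
  set i := m * r + (s : ℕ) with hi
  have hsm : (s : ℕ) < m := s.isLt
  have hm2 : m * (r + 2) = m * r + m + m := by ring
  have hm1 : m * (r + 1) = m * r + m := by ring
  have step1 : (∑ k ∈ Finset.range (m + 1), C (α k) * X ^ k) * p i
      = ∑ j ∈ Finset.range (m * (r + 2)), C (thetaOfJ α m J i j) * p j := by
    rw [Finset.sum_mul]
    have h1 : ∀ k ∈ Finset.range (m + 1), C (α k) * X ^ k * p i
        = ∑ j ∈ Finset.range (m * (r + 2)), C (α k * jacobiPow J k i j) * p j := by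
      intro k hk
      simp only [Finset.mem_range] at hk
      rw [mul_assoc, jacobi_key a b c p hprec0 hprec k i, Finset.mul_sum]
      have hsub : Finset.range (i + k + 1) ⊆ Finset.range (m * (r + 2)) :=
        Finset.range_subset_range.mpr (by omega)
      rw [Finset.sum_subset hsub
        (fun j hj hnj => by
          simp only [Finset.mem_range] at hj hnj
          rw [jacobiPow_band _ hJ0 k i j (Or.inl (by omega)), map_zero, zero_mul, mul_zero])]
      exact Finset.sum_congr rfl fun j _ => by rw [map_mul]; ring
    rw [Finset.sum_congr rfl h1, Finset.sum_comm]
    refine Finset.sum_congr rfl fun j _ => ?_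
    simp only [thetaOfJ]
    rw [map_sum, Finset.sum_mul]
  have hb2 : m * (r + 1) ≤ m * (r + 2) := by omega
  have hb1 : m * r ≤ m * (r + 1) := by omega
  have hA : ∑ j ∈ Finset.Ico (m * (r + 1)) (m * (r + 2)), C (thetaOfJ α m J i j) * p j
      = ∑ t : Fin m, C (blockA α m J r s t) * p (m * (r + 1) + (t : ℕ)) := by
    rw [Finset.sum_Ico_eq_sum_range, show m * (r + 2) - m * (r + 1) = m by omega]
    simp only [blockA]
    rw [Fin.sum_univ_eq_sum_range
      (fun t => C (thetaOfJ α m J i (m * (r + 1) + t)) * p (m * (r + 1) + t))]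
  have hB : ∑ j ∈ Finset.Ico (m * r) (m * (r + 1)), C (thetaOfJ α m J i j) * p j
      = ∑ t : Fin m, C (blockB α m J r s t) * p (m * r + (t : ℕ)) := by
    rw [Finset.sum_Ico_eq_sum_range, show m * (r + 1) - m * r = m by omega]
    simp only [blockB]
    rw [Fin.sum_univ_eq_sum_range
      (fun t => C (thetaOfJ α m J i (m * r + t)) * p (m * r + t))]
  have hC : ∑ j ∈ Finset.Ico 0 (m * r), C (thetaOfJ α m J i j) * p j
      = ∑ t : Fin m, C (blockC α m J r s t) * p (m * (r - 1) + (t : ℕ)) := by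
    rcases Nat.eq_zero_or_pos r with rfl | hr
    · simp [blockC]
    · obtain ⟨r', rfl⟩ : ∃ r', r = r' + 1 := ⟨r - 1, by omega⟩
      have e1 : m * (r' + 1) = m * r' + m := by ring
      rw [← Finset.sum_Ico_consecutive _ (Nat.zero_le (m * r')) (by omega : m * r' ≤ m * (r' + 1))]
      have hz : ∑ j ∈ Finset.Ico 0 (m * r'), C (thetaOfJ α m J i j) * p j = 0 := by
        refine Finset.sum_eq_zero fun j hj => ?_
        simp only [Finset.mem_Ico] at hj
        have hth : thetaOfJ α m J i j = 0 := by
          refine Finset.sum_eq_zero fun k hk => ?_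
          simp only [Finset.mem_range] at hk
          rw [jacobiPow_band _ hJ0 k i j (Or.inr (by omega))]
          ring
        rw [hth, map_zero, zero_mul]
      rw [hz, zero_add]
      rw [Finset.sum_Ico_eq_sum_range, show m * (r' + 1) - m * r' = m by omega]
      simp only [blockC, Nat.add_sub_cancel, Nat.succ_ne_zero, if_false]
      rw [Fin.sum_univ_eq_sum_range
        (fun t => C (thetaOfJ α m J i (m * r' + t)) * p (m * r' + t))]
  rw [step1, Finset.range_eq_Ico,
    ← Finset.sum_Ico_consecutive (fun j => C (thetaOfJ α m J i j) * p j)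
      (Nat.zero_le (m * (r + 1))) hb2,
    ← Finset.sum_Ico_consecutive _ (Nat.zero_le (m * r)) hb1,
    hA, hB, hC]
  ring
end

section
/- For every r ≥ 0, the matrix-valued orthogonal polynomial P_r satisfies P_r(Θ(x)) · 𝐩_0(x) = 𝐩_r(x), as an identity of vectors of real polynomials in x. -/
open Polynomial Finset

section Lemmas
variable (a b c : ℕ → ℝ)

lemma sum_eq_sum_two {M : Type*} [AddCommMonoid M] (s t : Finset ℕ) (f : ℕ → M)
    (hs : ∀ j ∈ s, j ∉ t → f j = 0) (ht : ∀ j ∈ t, j ∉ s → f j = 0) :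
    ∑ j ∈ s, f j = ∑ j ∈ t, f j := by
  have h1 : ∑ j ∈ s ∩ t, f j = ∑ j ∈ s, f j :=
    Finset.sum_subset Finset.inter_subset_left
      (fun x hx hnx => hs x hx (fun hxt => hnx (Finset.mem_inter.2 ⟨hx, hxt⟩)))
  have h2 : ∑ j ∈ s ∩ t, f j = ∑ j ∈ t, f j :=
    Finset.sum_subset Finset.inter_subset_right
      (fun x hx hnx => ht x hx (fun hxs => hnx (Finset.mem_inter.2 ⟨hxs, hx⟩)))
  rw [← h1, h2]

lemma jm_eq_zero {j l : ℕ} (h : ¬(j ≤ l + 1 ∧ l ≤ j + 1)) : jacobiMat a b c j l = 0 := by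
  unfold jacobiMat
  split_ifs with h1 h2 h3
  all_goals first | rfl | omega

lemma pow_upper : ∀ (k i j : ℕ), i + k < j → jacobiPow (jacobiMat a b c) k i j = 0 := by
  intro k
  induction k with
  | zero => intro i j h; simp only [jacobiPow]; rw [if_neg (by omega)]
  | succ k ih =>
    intro i j h
    simp only [jacobiPow]
    apply Finset.sum_eq_zero
    intro l hl
    rw [Finset.mem_Icc] at hl
    rw [ih i l (by omega), zero_mul]

lemma pow_lower : ∀ (k i j : ℕ), j + k < i → jacobiPow (jacobiMat a b c) k i j = 0 := by
  intro k
  induction k with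
  | zero => intro i j h; simp only [jacobiPow]; rw [if_neg (by omega)]
  | succ k ih =>
    intro i j h
    simp only [jacobiPow]
    apply Finset.sum_eq_zero
    intro l hl
    rw [Finset.mem_Icc] at hl
    rw [ih i l (by omega), zero_mul]

lemma pow_top : ∀ (k i : ℕ), jacobiPow (jacobiMat a b c) k i (i + k) = ∏ l ∈ range k, a (i + l) := by
  intro k
  induction k with
  | zero => simp [jacobiPow]
  | succ k ih =>
    intro i
    simp only [jacobiPow]
    have hIcc : (i + (k + 1)) - 1 = i + k := by omega
    rw [hIcc]
    rw [Finset.sum_eq_single (i + k)]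
    · rw [ih i]
      have : jacobiMat a b c (i + k) (i + (k + 1)) = a (i + k) := by
        unfold jacobiMat
        rw [if_neg (by omega), if_pos (by omega)]
      rw [this, Finset.prod_range_succ]
    · intro l hl hne
      rw [Finset.mem_Icc] at hl
      rw [pow_upper a b c k i l (by omega), zero_mul]
    · intro h
      exact absurd (Finset.mem_Icc.2 (by omega)) h

lemma theta_upper (α : ℕ → ℝ) (m : ℕ) {i j : ℕ} (h : i + m < j) :
    thetaOfJ α m (jacobiMat a b c) i j = 0 := by
  apply Finset.sum_eq_zero
  intro k hk
  rw [Finset.mem_range] at hk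
  rw [pow_upper a b c k i j (by omega), mul_zero]

lemma theta_lower (α : ℕ → ℝ) (m : ℕ) {i j : ℕ} (h : j + m < i) :
    thetaOfJ α m (jacobiMat a b c) i j = 0 := by
  apply Finset.sum_eq_zero
  intro k hk
  rw [Finset.mem_range] at hk
  rw [pow_lower a b c k i j (by omega), mul_zero]

lemma theta_top (α : ℕ → ℝ) (m : ℕ) (i : ℕ) :
    thetaOfJ α m (jacobiMat a b c) i (i + m) = α m * ∏ l ∈ range m, a (i + l) := by
  unfold thetaOfJ
  rw [Finset.sum_eq_single m]
  · rw [pow_top]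
  · intro k hk hne
    rw [Finset.mem_range] at hk
    rw [pow_upper a b c k i (i + m) (by omega), mul_zero]
  · intro h
    exact absurd (Finset.mem_range.2 (by omega)) h

end Lemmas

section Scalar
variable (a b c : ℕ → ℝ) (p : ℕ → Polynomial ℝ)
variable (hprec0 : Polynomial.X * p 0 = Polynomial.C (a 0) * p 1 + Polynomial.C (b 0) * p 0)
variable (hprec : ∀ n, 1 ≤ n →
      Polynomial.X * p n
        = Polynomial.C (a n) * p (n + 1) + Polynomial.C (b n) * p n
          + Polynomial.C (c n) * p (n - 1))

include hprec0 hprec in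
lemma step1 (N j : ℕ) (hN : j + 2 ≤ N) :
    X * p j = ∑ l ∈ range N, C (jacobiMat a b c j l) * p l := by
  rcases j with _ | j'
  · rw [← Finset.sum_subset (show ({0, 1} : Finset ℕ) ⊆ range N by
        intro x hx; simp only [Finset.mem_insert, Finset.mem_singleton] at hx
        rw [Finset.mem_range]; omega)
      (by intro l _ hl
          simp only [Finset.mem_insert, Finset.mem_singleton] at hl
          rw [jm_eq_zero a b c (by omega), map_zero, zero_mul])]
    rw [Finset.sum_insert (by simp), Finset.sum_singleton]
    have h1 : jacobiMat a b c 0 0 = b 0 := by unfold jacobiMat; rw [if_pos rfl]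
    have h2 : jacobiMat a b c 0 1 = a 0 := by
      unfold jacobiMat; rw [if_neg (by omega), if_pos rfl]
    rw [h1, h2, hprec0]; ring
  · rw [← Finset.sum_subset (show ({j', j' + 1, j' + 2} : Finset ℕ) ⊆ range N by
        intro x hx; simp only [Finset.mem_insert, Finset.mem_singleton] at hx
        rw [Finset.mem_range]; omega)
      (by intro l _ hl
          simp only [Finset.mem_insert, Finset.mem_singleton] at hl
          rw [jm_eq_zero a b c (by omega), map_zero, zero_mul])]
    rw [Finset.sum_insert (by simp), Finset.sum_insert (by simp), Finset.sum_singleton]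
    have h1 : jacobiMat a b c (j' + 1) j' = c (j' + 1) := by
      unfold jacobiMat; rw [if_neg (by omega), if_neg (by omega), if_pos rfl]
    have h2 : jacobiMat a b c (j' + 1) (j' + 1) = b (j' + 1) := by
      unfold jacobiMat; rw [if_pos rfl]
    have h3 : jacobiMat a b c (j' + 1) (j' + 2) = a (j' + 1) := by
      unfold jacobiMat; rw [if_neg (by omega), if_pos rfl]
    have hr := hprec (j' + 1) (by omega)
    simp only [Nat.add_sub_cancel] at hr
    rw [h1, h2, h3, hr]; ring

include hprec0 hprec in
lemma pow_step : ∀ (k i N : ℕ), i + k + 1 ≤ N →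
    X ^ k * p i = ∑ j ∈ range N, C (jacobiPow (jacobiMat a b c) k i j) * p j := by
  intro k
  induction k with
  | zero =>
    intro i N hN
    rw [pow_zero, one_mul, Finset.sum_eq_single i]
    · simp [jacobiPow]
    · intro j hj hne
      simp only [jacobiPow]
      rw [if_neg (fun h => hne h.symm), map_zero, zero_mul]
    · intro h; exact absurd (Finset.mem_range.2 (by omega)) h
  | succ k ih =>
    intro i N hN
    have key : ∀ l, l < N →
        ∑ j ∈ range (i + k + 1), jacobiPow (jacobiMat a b c) k i j * jacobiMat a b c j l
          = jacobiPow (jacobiMat a b c) (k + 1) i l := by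
      intro l hl
      simp only [jacobiPow]
      apply sum_eq_sum_two
      · intro j hj hnj
        rw [Finset.mem_Icc] at hnj
        rw [jm_eq_zero a b c (by omega), mul_zero]
      · intro j hj hnj
        rw [Finset.mem_range] at hnj
        rw [pow_upper a b c k i j (by omega), zero_mul]
    calc X ^ (k + 1) * p i = X * (X ^ k * p i) := by ring
      _ = ∑ j ∈ range N, X * (C (jacobiPow (jacobiMat a b c) k i j) * p j) := by
          rw [ih i N (by omega), Finset.mul_sum]
      _ = ∑ j ∈ range (i + k + 1), X * (C (jacobiPow (jacobiMat a b c) k i j) * p j) := by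
          refine (Finset.sum_subset (Finset.range_subset_range.2 (by omega)) ?_).symm
          intro j hj hnj
          rw [Finset.mem_range, not_lt] at hnj
          rw [pow_upper a b c k i j (by omega), map_zero, zero_mul, mul_zero]
      _ = ∑ j ∈ range (i + k + 1), ∑ l ∈ range N,
            C (jacobiPow (jacobiMat a b c) k i j * jacobiMat a b c j l) * p l := by
          apply Finset.sum_congr rfl
          intro j hj
          rw [Finset.mem_range] at hj
          rw [show X * (C (jacobiPow (jacobiMat a b c) k i j) * p j)
              = C (jacobiPow (jacobiMat a b c) k i j) * (X * p j) by ring,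
            step1 a b c p hprec0 hprec N j (by omega), Finset.mul_sum]
          apply Finset.sum_congr rfl
          intro l _
          rw [map_mul]; ring
      _ = ∑ l ∈ range N, C (jacobiPow (jacobiMat a b c) (k + 1) i l) * p l := by
          rw [Finset.sum_comm]
          apply Finset.sum_congr rfl
          intro l hl
          rw [← Finset.sum_mul, ← map_sum, key l (Finset.mem_range.1 hl)]

include hprec0 hprec in
lemma theta_step (α : ℕ → ℝ) (m : ℕ) (i N : ℕ) (hN : i + m + 1 ≤ N) :
    (∑ k ∈ Finset.range (m + 1), Polynomial.C (α k) * Polynomial.X ^ k) * p i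
      = ∑ j ∈ range N, C (thetaOfJ α m (jacobiMat a b c) i j) * p j := by
  rw [Finset.sum_mul]
  calc ∑ k ∈ range (m + 1), C (α k) * X ^ k * p i
      = ∑ k ∈ range (m + 1), ∑ j ∈ range N,
          C (α k * jacobiPow (jacobiMat a b c) k i j) * p j := by
        apply Finset.sum_congr rfl
        intro k hk
        rw [Finset.mem_range] at hk
        rw [mul_assoc, pow_step a b c p hprec0 hprec k i N (by omega), Finset.mul_sum]
        apply Finset.sum_congr rfl
        intro j _
        rw [map_mul]; ring
    _ = ∑ j ∈ range N, C (thetaOfJ α m (jacobiMat a b c) i j) * p j := by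
        rw [Finset.sum_comm]
        apply Finset.sum_congr rfl
        intro j _
        rw [← Finset.sum_mul, ← map_sum]
        rfl

end Scalar

section Blocks
variable (a b c : ℕ → ℝ) (α : ℕ → ℝ) (m : ℕ)

lemma blockA_isUnit (ha : ∀ n, 0 < a n) (hα : α m ≠ 0) (r : ℕ) :
    IsUnit (blockA α m (jacobiMat a b c) r).det := by
  rw [Matrix.det_of_lowerTriangular _ (by
    intro i j hij
    rw [OrderDual.toDual_lt_toDual] at hij
    have hij' : (i : ℕ) < j := hij
    have hmul : m * (r + 1) = m * r + m := by ring
    exact theta_upper a b c α m (by omega))]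
  rw [isUnit_iff_ne_zero]
  apply Finset.prod_ne_zero_iff.2
  intro s _
  have hmul : m * (r + 1) + (s : ℕ) = (m * r + s) + m := by ring
  unfold blockA
  rw [hmul, theta_top]
  exact mul_ne_zero hα (Finset.prod_ne_zero_iff.2 (fun l _ => (ha _).ne'))

variable (p : ℕ → Polynomial ℝ)
variable (hprec0 : Polynomial.X * p 0 = Polynomial.C (a 0) * p 1 + Polynomial.C (b 0) * p 0)
variable (hprec : ∀ n, 1 ≤ n →
      Polynomial.X * p n
        = Polynomial.C (a n) * p (n + 1) + Polynomial.C (b n) * p n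
          + Polynomial.C (c n) * p (n - 1))

include hprec0 hprec in
lemma block_rel (hm : 1 ≤ m) (r : ℕ) (s : Fin m) :
    (∑ k ∈ Finset.range (m + 1), Polynomial.C (α k) * Polynomial.X ^ k) * p (m * r + s)
      = (∑ t : Fin m, C (blockA α m (jacobiMat a b c) r s t) * p (m * (r + 1) + t))
        + (∑ t : Fin m, C (blockB α m (jacobiMat a b c) r s t) * p (m * r + t))
        + (∑ t : Fin m, C (blockC α m (jacobiMat a b c) r s t) * p (m * (r - 1) + t)) := by
  have hs : (s : ℕ) < m := s.isLt
  have e1 : m * (r + 1) = m * r + m := by ring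
  have e2 : m * (r + 2) = m * r + m + m := by ring
  set f : ℕ → Polynomial ℝ :=
    fun j => C (thetaOfJ α m (jacobiMat a b c) (m * r + s) j) * p j with hf
  have hmain : (∑ k ∈ Finset.range (m + 1), Polynomial.C (α k) * Polynomial.X ^ k) * p (m * r + s)
      = ∑ j ∈ range (m * (r + 2)), f j :=
    theta_step a b c p hprec0 hprec α m (m * r + s) (m * (r + 2)) (by omega)
  -- drop the low zeros
  have hdrop : ∑ j ∈ range (m * (r + 2)), f j = ∑ j ∈ Ico (m * (r - 1)) (m * (r + 2)), f j := by
    refine (Finset.sum_subset ?_ ?_).symm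
    · intro x hx
      rw [Finset.mem_Ico] at hx
      rw [Finset.mem_range]; omega
    · intro j hj hnj
      rw [Finset.mem_range] at hj
      rw [Finset.mem_Ico, not_and_or, not_le, not_lt] at hnj
      have hjlt : j + m < m * r + s := by
        rcases hnj with h | h
        · rcases r with _ | r'
          · omega
          · have : m * (r' + 1 - 1) + m = m * (r' + 1) := by
              simp only [Nat.add_sub_cancel]; ring
            omega
        · omega
      show C (thetaOfJ α m (jacobiMat a b c) (m * r + ↑s) j) * p j = 0
      rw [theta_lower a b c α m hjlt, map_zero, zero_mul]
  -- split into three blocks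
  have hsplit : ∑ j ∈ Ico (m * (r - 1)) (m * (r + 2)), f j
      = ∑ j ∈ Ico (m * (r - 1)) (m * r), f j + ∑ j ∈ Ico (m * r) (m * (r + 1)), f j
        + ∑ j ∈ Ico (m * (r + 1)) (m * (r + 2)), f j := by
    rw [Finset.sum_Ico_consecutive f (by
        apply Nat.mul_le_mul_left; omega) (by apply Nat.mul_le_mul_left; omega),
      Finset.sum_Ico_consecutive f (by apply Nat.mul_le_mul_left; omega)
        (by apply Nat.mul_le_mul_left; omega)]
  have hA : ∑ j ∈ Ico (m * (r + 1)) (m * (r + 2)), f j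
      = ∑ t : Fin m, C (blockA α m (jacobiMat a b c) r s t) * p (m * (r + 1) + t) := by
    rw [Finset.sum_Ico_eq_sum_range]
    rw [show m * (r + 2) - m * (r + 1) = m by have h := e2; have h2 := e1; omega]
    rw [← Fin.sum_univ_eq_sum_range (fun t => f (m * (r + 1) + t)) m]
    rfl
  have hB : ∑ j ∈ Ico (m * r) (m * (r + 1)), f j
      = ∑ t : Fin m, C (blockB α m (jacobiMat a b c) r s t) * p (m * r + t) := by
    rw [Finset.sum_Ico_eq_sum_range]
    rw [show m * (r + 1) - m * r = m by have h := e1; omega]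
    rw [← Fin.sum_univ_eq_sum_range (fun t => f (m * r + t)) m]
    rfl
  have hC : ∑ j ∈ Ico (m * (r - 1)) (m * r), f j
      = ∑ t : Fin m, C (blockC α m (jacobiMat a b c) r s t) * p (m * (r - 1) + t) := by
    rcases r with _ | r'
    · simp only [Nat.mul_zero, Finset.Ico_self, Finset.sum_empty]
      refine (Finset.sum_eq_zero ?_).symm
      intro t _
      simp [blockC]
    · simp only [Nat.add_sub_cancel]
      rw [Finset.sum_Ico_eq_sum_range]
      rw [show m * (r' + 1) - m * r' = m by rw [Nat.mul_succ]; omega]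
      rw [← Fin.sum_univ_eq_sum_range (fun t => f (m * r' + t)) m]
      apply Finset.sum_congr rfl
      intro t _
      show C (thetaOfJ α m (jacobiMat a b c) (m * (r' + 1) + ↑s) (m * r' + ↑t)) * p (m * r' + ↑t) = _
      simp only [blockC, if_neg (Nat.succ_ne_zero r'), Nat.add_sub_cancel]
  rw [hmain, hdrop, hsplit, hA, hB, hC]
  ring

end Blocks

/-- the matrix-valued orthogonal polynomials `P_r` (defined by `P_0 = I`
and `A_r P_{r+1}(x) = x P_r(x) - B_r P_r(x) - C_r P_{r-1}(x)`, where `C_0 = 0` subsumes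
`P_{-1} = 0`) satisfy `P_r(Θ(x)) 𝐩_0(x) = 𝐩_r(x)` as vectors of real polynomials. -/
theorem matrix_poly_relates_scalar_polys
    (a b : ℕ → ℝ) (c : ℕ → ℝ) (ha : ∀ n, 0 < a n)
    (p : ℕ → Polynomial ℝ) (hp0 : p 0 = 1)
    (hprec0 : Polynomial.X * p 0 = Polynomial.C (a 0) * p 1 + Polynomial.C (b 0) * p 0)
    (hprec : ∀ n, 1 ≤ n →
      Polynomial.X * p n
        = Polynomial.C (a n) * p (n + 1) + Polynomial.C (b n) * p n
          + Polynomial.C (c n) * p (n - 1))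
    (m : ℕ) (hm : 1 ≤ m) (α : ℕ → ℝ) (hα : α m ≠ 0)
    (P : ℕ → Matrix (Fin m) (Fin m) (Polynomial ℝ))
    (hP0 : P 0 = 1)
    (hPrec : ∀ r : ℕ,
      (blockA α m (jacobiMat a b c) r).map Polynomial.C * P (r + 1)
        = (Polynomial.X : Polynomial ℝ) • P r
          - (blockB α m (jacobiMat a b c) r).map Polynomial.C * P r
          - (blockC α m (jacobiMat a b c) r).map Polynomial.C * P (r - 1))
    (r : ℕ) (s : Fin m) :
    ∑ t : Fin m,
        (P r s t).comp (∑ k ∈ Finset.range (m + 1), Polynomial.C (α k) * Polynomial.X ^ k)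
          * p (t : ℕ)
      = p (m * r + s) := by
  set Θp : Polynomial ℝ := ∑ k ∈ Finset.range (m + 1), Polynomial.C (α k) * Polynomial.X ^ k
    with hΘp
  clear_value Θp
  let φ : Polynomial ℝ →+* Polynomial ℝ := Polynomial.eval₂RingHom Polynomial.C Θp
  have hφ : ∀ q : Polynomial ℝ, φ q = q.comp Θp := fun q => rfl
  have hsumcomp : ∀ (M : Matrix (Fin m) (Fin m) ℝ) (Q : Matrix (Fin m) (Fin m) (Polynomial ℝ))
      (s0 u : Fin m),
      ((M.map C * Q) s0 u).comp Θp = ∑ t : Fin m, C (M s0 t) * (Q t u).comp Θp := by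
    intro M Q s0 u
    rw [Matrix.mul_apply, ← hφ, map_sum]
    apply Finset.sum_congr rfl
    intro t _
    rw [map_mul, Matrix.map_apply, hφ, hφ, Polynomial.C_comp]
  suffices H : ∀ r : ℕ, ∀ s : Fin m, ∑ t : Fin m, (P r s t).comp Θp * p t = p (m * r + s)
    from H r s
  intro r
  induction r using Nat.strong_induction_on with
  | _ r ih =>
    rcases r with _ | r'
    · intro s
      rw [hP0]
      rw [Finset.sum_eq_single s]
      · rw [Matrix.one_apply_eq, Polynomial.one_comp, one_mul]
        norm_num
      · intro t _ hne
        rw [Matrix.one_apply_ne (fun h => hne h.symm), Polynomial.zero_comp, zero_mul]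
      · intro h; exact absurd (Finset.mem_univ s) h
    · intro s
      have hq : ∀ u : Fin m, ∑ t : Fin m, (P r' u t).comp Θp * p t = p (m * r' + u) :=
        fun u => ih r' (by omega) u
      have hq' : ∀ u : Fin m,
          ∑ t : Fin m, (P (r' - 1) u t).comp Θp * p t = p (m * (r' - 1) + u) :=
        fun u => ih (r' - 1) (by omega) u
      set A := blockA α m (jacobiMat a b c) r' with hA
      set Bm := blockB α m (jacobiMat a b c) r' with hBm
      set Cm := blockC α m (jacobiMat a b c) r' with hCm
      have key : ∀ s0 : Fin m,
          ∑ t : Fin m, C (A s0 t) * (∑ u : Fin m, (P (r' + 1) t u).comp Θp * p u)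
            = ∑ t : Fin m, C (A s0 t) * p (m * (r' + 1) + t) := by
        intro s0
        have base : ∑ u : Fin m, ((A.map C * P (r' + 1)) s0 u).comp Θp * p u
            = ∑ u : Fin m,
                ((((Polynomial.X : Polynomial ℝ) • P r' - Bm.map C * P r'
                  - Cm.map C * P (r' - 1)) s0 u).comp Θp) * p u := by
          rw [hA, hBm, hCm, hPrec r']
        have lhs1 : ∑ u : Fin m, ((A.map C * P (r' + 1)) s0 u).comp Θp * p u
            = ∑ t : Fin m, C (A s0 t) * (∑ u : Fin m, (P (r' + 1) t u).comp Θp * p u) := by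
          calc ∑ u : Fin m, ((A.map C * P (r' + 1)) s0 u).comp Θp * p u
              = ∑ u : Fin m, ∑ t : Fin m,
                  C (A s0 t) * ((P (r' + 1) t u).comp Θp * p u) := by
                apply Finset.sum_congr rfl
                intro u _
                rw [hsumcomp A (P (r' + 1)) s0 u, Finset.sum_mul]
                simp only [mul_assoc]
            _ = _ := by
                rw [Finset.sum_comm]
                exact Finset.sum_congr rfl fun t _ => (Finset.mul_sum _ _ _).symm
        have rhs1 : ∑ u : Fin m,
              ((((Polynomial.X : Polynomial ℝ) • P r' - Bm.map C * P r'
                - Cm.map C * P (r' - 1)) s0 u).comp Θp) * p u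
            = ∑ t : Fin m, C (A s0 t) * p (m * (r' + 1) + t) := by
          have expand : ∀ u : Fin m,
              ((((Polynomial.X : Polynomial ℝ) • P r' - Bm.map C * P r'
                - Cm.map C * P (r' - 1)) s0 u).comp Θp) * p u
              = Θp * ((P r' s0 u).comp Θp * p u)
                - (∑ t : Fin m, C (Bm s0 t) * ((P r' t u).comp Θp * p u))
                - (∑ t : Fin m, C (Cm s0 t) * ((P (r' - 1) t u).comp Θp * p u)) := by
            intro u
            rw [Matrix.sub_apply, Matrix.sub_apply, Matrix.smul_apply, smul_eq_mul,
              Polynomial.sub_comp, Polynomial.sub_comp, Polynomial.mul_comp,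
              Polynomial.X_comp, hsumcomp Bm (P r') s0 u, hsumcomp Cm (P (r' - 1)) s0 u,
              sub_mul, sub_mul, Finset.sum_mul, Finset.sum_mul]
            simp only [mul_assoc]
          calc ∑ u : Fin m,
                ((((Polynomial.X : Polynomial ℝ) • P r' - Bm.map C * P r'
                  - Cm.map C * P (r' - 1)) s0 u).comp Θp) * p u
              = Θp * (∑ u : Fin m, (P r' s0 u).comp Θp * p u)
                - (∑ t : Fin m, C (Bm s0 t) * (∑ u : Fin m, (P r' t u).comp Θp * p u))
                - (∑ t : Fin m, C (Cm s0 t)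
                    * (∑ u : Fin m, (P (r' - 1) t u).comp Θp * p u)) := by
                rw [Finset.sum_congr rfl (fun u _ => expand u),
                  Finset.sum_sub_distrib, Finset.sum_sub_distrib, ← Finset.mul_sum]
                congr 1
                · congr 1
                  rw [Finset.sum_comm]
                  exact Finset.sum_congr rfl fun t _ => (Finset.mul_sum _ _ _).symm
                · rw [Finset.sum_comm]
                  exact Finset.sum_congr rfl fun t _ => (Finset.mul_sum _ _ _).symm
            _ = Θp * p (m * r' + s0)
                - (∑ t : Fin m, C (Bm s0 t) * p (m * r' + t))
                - (∑ t : Fin m, C (Cm s0 t) * p (m * (r' - 1) + t)) := by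
                rw [hq s0]
                congr 1
                · congr 1
                  exact Finset.sum_congr rfl fun t _ => by rw [hq t]
                · exact Finset.sum_congr rfl fun t _ => by rw [hq' t]
            _ = ∑ t : Fin m, C (A s0 t) * p (m * (r' + 1) + t) := by
                rw [hΘp, block_rel a b c α m p hprec0 hprec hm r' s0, ← hA, ← hBm, ← hCm]
                ring
        rw [lhs1, rhs1] at base
        exact base
      set d : Fin m → Polynomial ℝ :=
        fun t => (∑ u : Fin m, (P (r' + 1) t u).comp Θp * p u) - p (m * (r' + 1) + t) with hd
      have hvd : Matrix.mulVec (A.map C) d = 0 := by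
        funext s0
        show ∑ t : Fin m, (A.map C) s0 t * d t = 0
        calc ∑ t : Fin m, (A.map C) s0 t * d t
            = (∑ t : Fin m, C (A s0 t) * (∑ u : Fin m, (P (r' + 1) t u).comp Θp * p u))
              - ∑ t : Fin m, C (A s0 t) * p (m * (r' + 1) + t) := by
              rw [← Finset.sum_sub_distrib]
              apply Finset.sum_congr rfl
              intro t _
              simp only [Matrix.map_apply, hd]
              ring
          _ = 0 := by rw [key s0]; exact sub_self _
      have hdet : IsUnit (A.map (Polynomial.C : ℝ →+* Polynomial ℝ) : _).det := by
        have h1 : (A.map (Polynomial.C : ℝ →+* Polynomial ℝ)).det = Polynomial.C A.det := by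
          rw [← RingHom.mapMatrix_apply, ← RingHom.map_det]
        rw [h1, Polynomial.isUnit_C, hA]
        exact blockA_isUnit a b c α m ha hα r'
      have hd0 : d = 0 := by
        have h2 := congrArg (fun v => Matrix.mulVec (A.map Polynomial.C)⁻¹ v) hvd
        simpa only [Matrix.mulVec_mulVec, Matrix.nonsing_inv_mul _ hdet, Matrix.one_mulVec,
          Matrix.mulVec_zero] using h2
      have h3 : d s = 0 := congrFun hd0 s
      simp only [hd] at h3
      exact sub_eq_zero.mp h3
end

section
/- The matrix-valued inner product ⟨P, Q⟩_Θ = ∫ P(Θ(x)) W(x) Q(Θ(x))ᵀ dμ(x) is non-degenerate: for every m×m matrix-valued polynomial P with real coefficients, ∫ P(Θ(x)) W(x) P(Θ(x))ᵀ dμ(x) = 0 implies P = 0. Moreover ∫ P(Θ(x)) W(x) P(Θ(x))ᵀ dμ(x) is always positive semidefinite. -/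
open MeasureTheory

/-- The Gram matrix `⟨Q, R⟩_Θ = ∫ Q(Θ(x)) W(x) R(Θ(x))ᵀ dμ(x)` of two `m × m`
matrix-valued polynomials, where `W(x) = 𝐩_0(x) 𝐩_0(x)ᵀ` is built from the scalar
polynomials `p_0, …, p_{m-1}`; stated entrywise. -/
noncomputable def thetaGram (m : ℕ) (Θ : Polynomial ℝ) (p : ℕ → Polynomial ℝ)
    (μ : Measure ℝ) (Q R : Matrix (Fin m) (Fin m) (Polynomial ℝ)) :
    Matrix (Fin m) (Fin m) ℝ :=
  fun s t =>
    ∫ x : ℝ,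
      (∑ u : Fin m, ∑ v : Fin m,
        ((Q s u).comp Θ).eval x * ((p (u : ℕ)).eval x * (p (v : ℕ)).eval x)
          * ((R t v).comp Θ).eval x) ∂μ

/-!
Write `f s = ∑ u, Q s u (Θ) * p u` for the entries of `Q(Θ) 𝐩_0`. Then `⟨Q, Q⟩_Θ` is the Gram
matrix `(∫ f s * f t ∂μ)` of the `f s` in `L²(μ)`, hence positive semidefinite. If it vanishes,
every `f s` vanishes `μ`-a.e. The recurrence with `a n ≠ 0` gives `deg p n = n`, so the `p n` form
a basis of `ℝ[X]`, and orthogonality shows that the coordinate of `f s` on `p j` is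
`(∫ f s * p j ∂μ) / h j = 0`; thus `f s = 0`. Finally the nonzero summands `Q s u (Θ) * p u` have
degrees `m * deg (Q s u) + u`, pairwise distinct modulo `m`, so none of them can cancel.
-/

open Polynomial
open scoped Function Matrix

section Gram

variable {α : Type*} [MeasurableSpace α] {μ : Measure α}

theorem integral_mul_eq_inner_toLp {f g : α → ℝ} (hf : MemLp f 2 μ) (hg : MemLp g 2 μ) :
    ∫ x, f x * g x ∂μ = inner ℝ (hf.toLp f) (hg.toLp g) := by
  rw [L2.inner_def]
  refine integral_congr_ae ?_
  filter_upwards [hf.coeFn_toLp, hg.coeFn_toLp] with x hfx hgx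
  simp [hfx, hgx, mul_comm]

theorem posSemidef_integral_mul {ι : Type*} [Finite ι] {f : ι → α → ℝ}
    (hf : ∀ i, MemLp (f i) 2 μ) :
    (Matrix.of fun i j => ∫ x, f i x * f j x ∂μ).PosSemidef := by
  simp only [integral_mul_eq_inner_toLp (hf _) (hf _)]
  exact Matrix.posSemidef_gram ℝ _

theorem ae_eq_zero_of_integral_mul_self_eq_zero {f : α → ℝ}
    (hf : Integrable (fun x => f x * f x) μ) (h : ∫ x, f x * f x ∂μ = 0) : f =ᵐ[μ] 0 := by
  have hsq : (fun x => f x * f x) =ᵐ[μ] 0 :=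
    (integral_eq_zero_iff_of_nonneg (fun x => mul_self_nonneg (f x)) hf).1 h
  filter_upwards [hsq] with x hx using mul_self_eq_zero.1 hx

end Gram

namespace Polynomial

variable {μ : Measure ℝ}

theorem integrable_eval_of_integrable_pow (hmom : ∀ n : ℕ, Integrable (fun x : ℝ => x ^ n) μ)
    (q : ℝ[X]) : Integrable (fun x => q.eval x) μ := by
  simp_rw [eval_eq_sum_range]
  exact integrable_finsetSum _ fun i _ => (hmom i).const_mul _

theorem memLp_two_eval (hint : ∀ q : ℝ[X], Integrable (fun x => q.eval x) μ) (q : ℝ[X]) :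
    MemLp (fun x => q.eval x) 2 μ :=
  (memLp_two_iff_integrable_sq q.continuous.aestronglyMeasurable).2 <|
    (hint (q ^ 2)).congr (ae_of_all _ fun _ => eval_pow 2)

end Polynomial

theorem Polynomial.degree_C_mul_le {R : Type*} [Semiring R] (a : R) (q : R[X]) :
    (C a * q).degree ≤ q.degree := by
  rw [C_mul']; exact degree_smul_le _ _

section ThreeTermRecurrence

variable {R : Type*} [Ring R] [IsDomain R]

theorem Polynomial.degree_eq_of_X_mul_eq {q q' r : R[X]} {a : R} {n : ℕ} (ha : a ≠ 0)
    (hq : q.degree = n) (hr : r.degree ≤ n) (h : X * q = C a * q' + r) :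
    q'.degree = ↑(n + 1) := by
  have hXq : (X * q).degree = ↑(n + 1) := by
    rw [X_mul, degree_mul_X, hq]; rfl
  have hr' : r.degree < (X * q).degree := hXq ▸ hr.trans_lt (by exact_mod_cast n.lt_succ_self)
  rw [← degree_C_mul ha, eq_sub_of_add_eq h.symm, degree_sub_eq_left_of_degree_lt hr', hXq]

theorem Polynomial.degree_eq_of_three_term_recurrence (a b c : ℕ → R) (ha : ∀ n, a n ≠ 0)
    (p : ℕ → R[X]) (hp0 : p 0 = 1)
    (hprec0 : X * p 0 = C (a 0) * p 1 + C (b 0) * p 0)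
    (hprec : ∀ n, 1 ≤ n → X * p n = C (a n) * p (n + 1) + C (b n) * p n + C (c n) * p (n - 1))
    (n : ℕ) : (p n).degree = n := by
  suffices h : ∀ n, (p n).degree = n ∧ (p (n + 1)).degree = ↑(n + 1) from (h n).1
  intro n
  induction n with
  | zero =>
    have h0 : (p 0).degree = ↑0 := by rw [hp0, degree_one]
    exact ⟨h0, degree_eq_of_X_mul_eq (ha 0) h0 ((degree_C_mul_le _ _).trans h0.le) hprec0⟩
  | succ n ih =>
    obtain ⟨hn, hn1⟩ := ih
    refine ⟨hn1, degree_eq_of_X_mul_eq (r := C (b (n + 1)) * p (n + 1) + C (c (n + 1)) * p n)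
      (ha (n + 1)) hn1 ?_ ?_⟩
    · refine (degree_add_le _ _).trans (max_le ((degree_C_mul_le _ _).trans hn1.le) ?_)
      refine (degree_C_mul_le _ _).trans ?_
      rw [hn]
      exact_mod_cast n.le_succ
    · simpa [add_assoc] using hprec (n + 1) n.succ_pos

end ThreeTermRecurrence

namespace Polynomial.Sequence

theorem eq_zero_of_ae_eval_eq_zero {μ : Measure ℝ} (S : Sequence ℝ)
    (hint : ∀ q : ℝ[X], Integrable (fun x => q.eval x) μ) (h : ℕ → ℝ) (hh : ∀ n, h n ≠ 0)
    (horth : ∀ n k : ℕ, ∫ x, (S n).eval x * (S k).eval x ∂μ = if n = k then h n else 0)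
    {g : ℝ[X]} (hg : (fun x => g.eval x) =ᵐ[μ] 0) : g = 0 := by
  let b := S.basis fun i => isUnit_iff_ne_zero.2 (leadingCoeff_ne_zero.2 (S.ne_zero i))
  refine b.forall_coord_eq_zero_iff.1 fun j => ?_
  let φ : ℝ[X] →ₗ[ℝ] ℝ :=
    { toFun := fun q => ∫ x, q.eval x * (S j).eval x ∂μ
      map_add' := fun q r => by
        simp only [eval_add, add_mul]
        exact integral_add (by simpa using hint (q * S j)) (by simpa using hint (r * S j))
      map_smul' := fun c q => by
        simp only [eval_smul, smul_eq_mul, mul_assoc, RingHom.id_apply]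
        exact integral_const_mul c _ }
  have hφ : φ = h j • b.coord j := b.ext fun i => by
    rw [LinearMap.smul_apply, b.coord_apply, b.repr_self, Finsupp.single_apply, S.basis_eq_self]
    simp only [φ, LinearMap.coe_mk, AddHom.coe_mk, horth]
    split_ifs <;> simp_all
  have hφg : φ g = 0 := integral_eq_zero_of_ae <| by
    filter_upwards [hg] with x hx
    simp [hx]
  rw [hφ, LinearMap.smul_apply, smul_eq_mul] at hφg
  exact (mul_eq_zero.1 hφg).resolve_left (hh j)

theorem eq_zero_of_sum_comp_mul_eq_zero {R : Type*} [CommRing R] [IsDomain R] (S : Sequence R)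
    {m : ℕ} {Θ : R[X]} (hΘ : Θ.natDegree = m) {q : Fin m → R[X]}
    (hq : ∑ u, (q u).comp Θ * S u = 0) (u : Fin m) : q u = 0 := by
  have hΘ0 : Θ.natDegree ≠ 0 := by have := u.pos; omega
  have hcomp : ∀ v, q v ≠ 0 → (q v).comp Θ ≠ 0 := fun v hv h0 => by
    rcases comp_eq_zero_iff.1 h0 with h | ⟨-, h⟩
    · exact hv h
    · exact hΘ0 (by rw [h, natDegree_C])
  have hnatDegree : ∀ v, q v ≠ 0 →
      ((q v).comp Θ * S v).natDegree = (q v).natDegree * m + v := fun v hv => by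
    rw [natDegree_mul (hcomp v hv) (S.ne_zero v), natDegree_comp, hΘ, S.natDegree_eq]
  have hq_ne_zero : ∀ v, (q v).comp Θ * S v ≠ 0 → q v ≠ 0 := fun v h hv => h (by simp [hv])
  have hdisj : Set.Pairwise {v | v ∈ Finset.univ ∧ (q v).comp Θ * S v ≠ 0}
      (Ne on degree ∘ fun v => (q v).comp Θ * S v) := by
    rintro v ⟨-, hv⟩ w ⟨-, hw⟩ hvw hdeg
    have hdeg' := natDegree_eq_of_degree_eq hdeg
    rw [hnatDegree v (hq_ne_zero v hv), hnatDegree w (hq_ne_zero w hw)] at hdeg'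
    refine hvw (Fin.ext ?_)
    simpa only [Nat.mul_add_mod_of_lt v.isLt, Nat.mul_add_mod_of_lt w.isLt]
      using congrArg (· % m) hdeg'
  have hbot := degree_sum_eq_of_disjoint _ _ hdisj
  rw [hq, degree_zero, eq_comm, Finset.sup_eq_bot_iff] at hbot
  by_contra hu
  exact mul_ne_zero (hcomp u hu) (S.ne_zero u) (degree_eq_bot.1 (hbot u (Finset.mem_univ u)))

end Polynomial.Sequence

theorem thetaGram_eq_integral_mul (m : ℕ) (Θ : ℝ[X]) (p : ℕ → ℝ[X]) (μ : Measure ℝ)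
    (Q R : Matrix (Fin m) (Fin m) ℝ[X]) :
    thetaGram m Θ p μ Q R = Matrix.of fun s t =>
      ∫ x, ((Q.map (·.comp Θ) *ᵥ fun u => p u) s).eval x
        * ((R.map (·.comp Θ) *ᵥ fun u => p u) t).eval x ∂μ := by
  ext s t
  simp only [thetaGram, Matrix.of_apply, Matrix.mulVec, dotProduct, Matrix.map_apply,
    eval_finsetSum, eval_mul, Finset.sum_mul_sum]
  congr 1 with x
  exact Finset.sum_congr rfl fun u _ => Finset.sum_congr rfl fun v _ => by ring

theorem thetaGram_posSemidef_and_nondegenerate_general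
    (a b : ℕ → ℝ) (c : ℕ → ℝ) (ha : ∀ n, 0 < a n)
    (p : ℕ → Polynomial ℝ) (hp0 : p 0 = 1)
    (hprec0 : Polynomial.X * p 0 = Polynomial.C (a 0) * p 1 + Polynomial.C (b 0) * p 0)
    (hprec : ∀ n, 1 ≤ n →
      Polynomial.X * p n
        = Polynomial.C (a n) * p (n + 1) + Polynomial.C (b n) * p n
          + Polynomial.C (c n) * p (n - 1))
    (m : ℕ) (Θ : Polynomial ℝ) (hΘ : Θ.natDegree = m)
    (μ : Measure ℝ)
    (hmom : ∀ n : ℕ, Integrable (fun x : ℝ => x ^ n) μ)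
    (h : ℕ → ℝ) (hh : ∀ n, 0 < h n)
    (horth : ∀ n k : ℕ,
      ∫ x : ℝ, (p n).eval x * (p k).eval x ∂μ = if n = k then h n else 0)
    (Q : Matrix (Fin m) (Fin m) (Polynomial ℝ)) :
    (thetaGram m Θ p μ Q Q).PosSemidef
      ∧ (thetaGram m Θ p μ Q Q = 0 → Q = 0) := by
  have hint := integrable_eval_of_integrable_pow hmom
  let S : Sequence ℝ :=
    ⟨p, degree_eq_of_three_term_recurrence a b c (fun n => (ha n).ne') p hp0 hprec0 hprec⟩
  set f := Q.map (·.comp Θ) *ᵥ fun u => p u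
  have hG := thetaGram_eq_integral_mul m Θ p μ Q Q
  refine ⟨hG ▸ posSemidef_integral_mul fun s => memLp_two_eval hint (f s),
    fun hQ => Matrix.ext fun s u => ?_⟩
  have hfs : f s = 0 := by
    refine S.eq_zero_of_ae_eval_eq_zero hint h (fun n => (hh n).ne') horth ?_
    refine ae_eq_zero_of_integral_mul_self_eq_zero (by simpa using hint (f s * f s)) ?_
    simpa [hQ] using (congrFun₂ hG s s).symm
  exact S.eq_zero_of_sum_comp_mul_eq_zero hΘ hfs u

/-- the matrix-valued inner product `⟨P,Q⟩_Θ` is non-degenerate: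
`⟨P,P⟩_Θ = 0` implies `P = 0`; moreover `⟨P,P⟩_Θ` is always positive semidefinite. -/
theorem thetaGram_posSemidef_and_nondegenerate
    (a b : ℕ → ℝ) (c : ℕ → ℝ) (ha : ∀ n, 0 < a n)
    (p : ℕ → Polynomial ℝ) (hp0 : p 0 = 1)
    (hprec0 : Polynomial.X * p 0 = Polynomial.C (a 0) * p 1 + Polynomial.C (b 0) * p 0)
    (hprec : ∀ n, 1 ≤ n →
      Polynomial.X * p n
        = Polynomial.C (a n) * p (n + 1) + Polynomial.C (b n) * p n
          + Polynomial.C (c n) * p (n - 1))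
    (m : ℕ) (hm : 1 ≤ m) (Θ : Polynomial ℝ) (hΘ : Θ.natDegree = m)
    (μ : Measure ℝ)
    (hmom : ∀ n : ℕ, Integrable (fun x : ℝ => x ^ n) μ)
    (h : ℕ → ℝ) (hh : ∀ n, 0 < h n)
    (horth : ∀ n k : ℕ,
      ∫ x : ℝ, (p n).eval x * (p k).eval x ∂μ = if n = k then h n else 0)
    (Q : Matrix (Fin m) (Fin m) (Polynomial ℝ)) :
    (thetaGram m Θ p μ Q Q).PosSemidef
      ∧ (thetaGram m Θ p μ Q Q = 0 → Q = 0) :=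
  thetaGram_posSemidef_and_nondegenerate_general a b c ha p hp0 hprec0 hprec m Θ hΘ μ hmom h hh
    horth Q
end

section
/- Let m ≥ 1 and let (h_n)_{n≥0} be a sequence of positive real numbers; set H_n = diag(h_{mn}, h_{mn+1}, ..., h_{mn+m-1}). Suppose T ∈ ℂ^{m×m} satisfies T·H_n = H_n·T* for all n ≥ 0, where T* is the conjugate transpose. If for every pair i ≠ j with i, j ∈ {0, ..., m-1} the function n ↦ h_{mn+i}/h_{mn+j} is not constant on ℕ, then T is a diagonal matrix and all of its entries are real. -/
/-- if `T H_n = H_n T*` for all `n`, where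
`H_n = diag(h_{mn}, …, h_{mn+m-1})` with `h_k > 0`, and for every pair `i ≠ j` the
ratio `n ↦ h_{mn+i}/h_{mn+j}` is not constant, then `T` is diagonal with real entries. -/
theorem commuting_with_norms_implies_diagonal_real
    (m : ℕ) (hm : 1 ≤ m) (h : ℕ → ℝ) (hh : ∀ n, 0 < h n)
    (T : Matrix (Fin m) (Fin m) ℂ)
    (hT : ∀ n : ℕ,
      T * Matrix.diagonal (fun s : Fin m => (h (m * n + s) : ℂ))
        = Matrix.diagonal (fun s : Fin m => (h (m * n + s) : ℂ)) * T.conjTranspose)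
    (hratio : ∀ i j : Fin m, i ≠ j →
      ¬ ∃ cst : ℝ, ∀ n : ℕ, h (m * n + i) / h (m * n + j) = cst) :
    (∀ i j : Fin m, i ≠ j → T i j = 0) ∧ (∀ i j : Fin m, (T i j).im = 0) := by
  have key : ∀ (n : ℕ) (i j : Fin m),
      T i j * (h (m * n + j) : ℂ) = (h (m * n + i) : ℂ) * (starRingEnd ℂ) (T j i) := by
    intro n i j
    have := congrFun (congrFun (hT n) i) j
    simpa [Matrix.mul_diagonal, Matrix.diagonal_mul, Matrix.conjTranspose_apply] using this
  have hne : ∀ k : ℕ, (h k : ℂ) ≠ 0 := fun k => by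
    exact_mod_cast (hh k).ne'
  have hoff : ∀ i j : Fin m, i ≠ j → T i j = 0 := by
    intro i j hij
    by_cases h0 : T j i = 0
    · have hk := key 0 i j
      rw [h0, map_zero] at hk
      simp only [mul_zero] at hk
      exact (mul_eq_zero.mp hk).resolve_right (hne _)
    · exfalso
      apply hratio i j hij
      refine ⟨(T i j / (starRingEnd ℂ) (T j i)).re, fun n => ?_⟩
      have hc : ((h (m * n + i) / h (m * n + j) : ℝ) : ℂ)
          = T i j / (starRingEnd ℂ) (T j i) := by
        have hk := key n i j
        have h0' : (starRingEnd ℂ) (T j i) ≠ 0 := by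
          simpa using h0
        have hja := hne (m * n + j)
        rw [Complex.ofReal_div, div_eq_div_iff hja h0']
        linear_combination -hk
      rw [← hc, Complex.ofReal_re]
  refine ⟨hoff, fun i j => ?_⟩
  by_cases hij : i = j
  · subst hij
    have hk := key 0 i i
    rw [mul_comm] at hk
    have h2 : T i i = (starRingEnd ℂ) (T i i) := mul_left_cancel₀ (hne (m * 0 + i)) hk
    exact Complex.conj_eq_iff_im.mp h2.symm
  · rw [hoff i j hij]; simp
end

section
/- Let N ≥ 2 and let Ω = { (3 - 2i/(N-1))^{-1} : i = 0, 1, ..., N-1 }. If q ∈ [0,1] and q ∉ Ω, then the N+1 real numbers Θ_q(λ_0), Θ_q(λ_1), ..., Θ_q(λ_N) are pairwise distinct, where λ_j = 1 - 2j/N; that is, the matrix M_q = Θ_q(M_0) has simple spectrum. -/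
/-- The quadratic polynomial `Θ_q(x) = (qN/(N-1))x² + (1-q)x - q/(N-1)`. -/
noncomputable def thetaQ (N : ℕ) (q x : ℝ) : ℝ :=
  q * (N : ℝ) / ((N : ℝ) - 1) * x ^ 2 + (1 - q) * x - q / ((N : ℝ) - 1)

/-- The eigenvalue `λ_j = 1 - 2j/N` of the classical Ehrenfest matrix. -/
noncomputable def ehrLam (N j : ℕ) : ℝ := 1 - 2 * (j : ℝ) / (N : ℝ)

/-- if `q ∈ [0,1]` does not belong to
`Ω = {(3 - 2i/(N-1))⁻¹ : i = 0,…,N-1}`, then the values `Θ_q(λ_0), …, Θ_q(λ_N)`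
are pairwise distinct, i.e. `M_q = Θ_q(M_0)` has simple spectrum. -/
theorem simple_spectrum_off_Omega (N : ℕ) (hN : 2 ≤ N) (q : ℝ)
    (hq : q ∈ Set.Icc (0 : ℝ) 1)
    (hΩ : q ∉ {y : ℝ | ∃ i : ℕ, i < N ∧ y = (3 - 2 * (i : ℝ) / ((N : ℝ) - 1))⁻¹})
    (j k : ℕ) (hj : j ≤ N) (hk : k ≤ N) (hjk : j ≠ k) :
    thetaQ N q (ehrLam N j) ≠ thetaQ N q (ehrLam N k) := by
  intro h
  obtain ⟨hq0, hq1⟩ := hq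
  have hN2 : (2:ℝ) ≤ (N:ℝ) := by exact_mod_cast hN
  have hN1 : (0:ℝ) < (N:ℝ) - 1 := by linarith
  have hNpos : (0:ℝ) < (N:ℝ) := by linarith
  set F : ℝ := q * ((N:ℝ) + 1 - 2 * ((j:ℝ) + (k:ℝ))) + ((N:ℝ) - 1) with hF
  have hFne : F ≠ 0 := by
    intro hF0
    apply hΩ
    have hq' : q * (2*((j:ℝ)+(k:ℝ)) - (N:ℝ) - 1) = (N:ℝ) - 1 := by
      rw [hF] at hF0; linarith
    have hqpos : 0 < q := by
      rcases hq0.lt_or_eq with h'|h'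
      · exact h'
      · exfalso; rw [← h'] at hq'; simp at hq'; linarith
    have hd : (N:ℝ) - 1 ≤ 2*((j:ℝ)+(k:ℝ)) - (N:ℝ) - 1 := by nlinarith
    have hsN : N ≤ j + k := by
      have : (N:ℝ) ≤ (j:ℝ) + (k:ℝ) := by linarith
      exact_mod_cast this
    have hs2 : j + k ≤ 2*N - 1 := by omega
    refine ⟨2*N - 1 - (j+k), by omega, ?_⟩
    have hicast : ((2*N - 1 - (j+k) : ℕ) : ℝ) = 2*(N:ℝ) - 1 - ((j:ℝ)+(k:ℝ)) := by
      have h1 : (2*N - 1 - (j+k)) + (j+k) + 1 = 2*N := by omega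
      have h2 : (((2*N - 1 - (j+k)) + (j+k) + 1 : ℕ) : ℝ) = ((2*N : ℕ) : ℝ) := by
        rw [h1]
      push_cast at h2
      linarith
    rw [hicast]
    have hdpos : (0:ℝ) < 2*((j:ℝ)+(k:ℝ)) - (N:ℝ) - 1 := by linarith
    have heq : (3 - 2*(2*(N:ℝ) - 1 - ((j:ℝ)+(k:ℝ)))/((N:ℝ)-1))
        = (2*((j:ℝ)+(k:ℝ)) - (N:ℝ) - 1)/((N:ℝ)-1) := by
      field_simp; ring
    rw [heq, inv_div, eq_div_iff (ne_of_gt hdpos)]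
    linarith
  have key : (thetaQ N q (ehrLam N j) - thetaQ N q (ehrLam N k)) * ((N:ℝ) * ((N:ℝ)-1))
      = 2 * ((k:ℝ) - (j:ℝ)) * F := by
    simp only [thetaQ, ehrLam, hF]
    field_simp
    ring
  rw [h, sub_self, zero_mul] at key
  have hjk' : (j:ℝ) ≠ (k:ℝ) := by exact_mod_cast hjk
  have : 2 * ((k:ℝ) - (j:ℝ)) ≠ 0 := by
    intro h0
    apply hjk'
    linarith [mul_eq_zero.mp h0]
  exact this (by
    rcases mul_eq_zero.mp key.symm with h0 | h0
    · exact h0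
    · exact absurd h0 hFne)
end

section
/- Let N ≥ 2 and suppose q = (3 - 2i/(N-1))^{-1} for some i ∈ {0, 1, ..., N-1}. Then every value in the list Θ_q(λ_0), ..., Θ_q(λ_N) (where λ_j = 1 - 2j/N) is attained by at most two indices j ∈ {0, ..., N}, and the number of values attained by exactly two indices equals i/2 + 1 if i is even, and equals (i+1)/2 if i is odd. -/
open scoped Classical

/-- if `q = (3 - 2i/(N-1))⁻¹` for some `i ∈ {0,…,N-1}`, then each
value in the list `Θ_q(λ_0), …, Θ_q(λ_N)` is attained by at most two indices, and
the number of values attained by exactly two indices is `i/2 + 1` if `i` is even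
and `(i+1)/2` if `i` is odd. -/
theorem double_eigenvalue_count (N i : ℕ) (hN : 2 ≤ N) (hi : i < N) (q : ℝ)
    (hq : q = (3 - 2 * (i : ℝ) / ((N : ℝ) - 1))⁻¹) :
    (∀ j ∈ Finset.range (N + 1),
      ((Finset.range (N + 1)).filter
        (fun k => thetaQ N q (ehrLam N k) = thetaQ N q (ehrLam N j))).card ≤ 2)
    ∧ (((Finset.range (N + 1)).image (fun j => thetaQ N q (ehrLam N j))).filter
        (fun v =>
          ((Finset.range (N + 1)).filter
            (fun j => thetaQ N q (ehrLam N j) = v)).card = 2)).card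
      = (if Even i then i / 2 + 1 else (i + 1) / 2) := by
  have hn2 : (2:ℝ) ≤ (N:ℝ) := by exact_mod_cast hN
  have hn0 : (N:ℝ) ≠ 0 := by linarith
  have hn1 : (N:ℝ) - 1 ≠ 0 := by intro h; linarith
  have hd : (0:ℝ) < 3 - 2*(i:ℝ)/((N:ℝ)-1) := by
    have h1 : 2*(i:ℝ)/((N:ℝ)-1) ≤ 2 := by
      rw [div_le_iff₀ (by linarith)]
      have h2 : (i:ℝ) + 1 ≤ (N:ℝ) := by exact_mod_cast hi
      linarith
    linarith
  have hqpos : 0 < q := by rw [hq]; exact inv_pos.mpr hd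
  set S : ℕ := 2*N - 1 - i with hSdef
  have hS : S + i + 1 = 2*N := by omega
  have hSr : (S:ℝ) = 2*(N:ℝ) - 1 - (i:ℝ) := by
    have h := hS
    have : ((S:ℝ) + (i:ℝ) + 1) = 2*(N:ℝ) := by exact_mod_cast h
    linarith
  have hfac : ∀ j k : ℕ,
      thetaQ N q (ehrLam N k) - thetaQ N q (ehrLam N j)
      = (2*((j:ℝ)-k)/N) * (2*q/((N:ℝ)-1) * (((S:ℝ)) - ((j:ℝ)+k))) := by
    intro j k
    rw [hSr]
    have hq' : q * (3*((N:ℝ)-1) - 2*(i:ℝ)) = (N:ℝ) - 1 := by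
      rw [hq]
      rw [inv_mul_eq_div, div_eq_iff hd.ne']
      field_simp
    have e1 : (1 - q) = 2*q*(((N:ℝ)-1) - (i:ℝ))/((N:ℝ)-1) := by
      rw [eq_div_iff hn1]
      linarith [hq']
    simp only [thetaQ, ehrLam]
    rw [e1]
    field_simp
    ring
  have key : ∀ j k : ℕ, (thetaQ N q (ehrLam N k) = thetaQ N q (ehrLam N j)
      ↔ k = j ∨ (j:ℝ) + (k:ℝ) = (S:ℝ)) := by
    intro j k
    rw [← sub_eq_zero, hfac j k, mul_eq_zero, mul_eq_zero]
    constructor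
    · rintro (h | (h | h))
      · left
        have h2 : 2*((j:ℝ)-k) = 0 := by
          rcases div_eq_zero_iff.mp h with h' | h'
          · exact h'
          · exact absurd h' hn0
        have : (j:ℝ) = (k:ℝ) := by linarith
        exact_mod_cast this.symm
      · exfalso
        rcases div_eq_zero_iff.mp h with h' | h'
        · linarith
        · exact hn1 h'
      · right; linarith [sub_eq_zero.mp h]
    · rintro (rfl | h)
      · left; simp
      · right; right; linarith
  have keyN : ∀ j k : ℕ, (thetaQ N q (ehrLam N k) = thetaQ N q (ehrLam N j)
      ↔ k = j ∨ j + k = S) := by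
    intro j k
    rw [key j k]
    constructor
    · rintro (h | h)
      · exact Or.inl h
      · right; exact_mod_cast h
    · rintro (h | h)
      · exact Or.inl h
      · right; exact_mod_cast congrArg (Nat.cast : ℕ → ℝ) h
  have hSN : N ≤ S := by omega
  constructor
  · intro j hj
    have hsub : (Finset.range (N + 1)).filter
        (fun k => thetaQ N q (ehrLam N k) = thetaQ N q (ehrLam N j))
        ⊆ insert j {S - j} := by
      intro k hk
      simp only [Finset.mem_filter, Finset.mem_range] at hk
      have := (keyN j k).mp hk.2
      simp only [Finset.mem_insert, Finset.mem_singleton]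
      omega
    calc _ ≤ (insert j ({S - j} : Finset ℕ)).card := Finset.card_le_card hsub
    _ ≤ 2 := by
      refine (Finset.card_insert_le _ _).trans ?_
      simp
  · have pre : ∀ j : ℕ, j < N + 1 → S ≤ j + N →
        (Finset.range (N + 1)).filter
          (fun k => thetaQ N q (ehrLam N k) = thetaQ N q (ehrLam N j))
        = {j, S - j} := by
      intro j hj hjS
      ext k
      simp only [Finset.mem_filter, Finset.mem_range, Finset.mem_insert,
        Finset.mem_singleton]
      constructor
      · rintro ⟨hk, hfk⟩
        have := (keyN j k).mp hfk
        omega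
      · intro h
        have hk : k < N + 1 := by omega
        exact ⟨hk, (keyN j k).mpr (by omega)⟩
    set J' : Finset ℕ := (Finset.range (N + 1)).filter
        (fun j => S ≤ j + N ∧ 2*j < S) with hJ'
    have himg : ((Finset.range (N + 1)).image (fun j => thetaQ N q (ehrLam N j))).filter
        (fun v => ((Finset.range (N + 1)).filter
            (fun j => thetaQ N q (ehrLam N j) = v)).card = 2)
        = J'.image (fun j => thetaQ N q (ehrLam N j)) := by
      ext v
      simp only [Finset.mem_filter, Finset.mem_image, Finset.mem_range, hJ']
      constructor
      · rintro ⟨⟨j, hj, rfl⟩, hcard⟩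
        obtain ⟨k, hkmem, hkj⟩ :=
          Finset.exists_mem_ne ((by norm_num : (1:ℕ) < 2).trans_le hcard.ge) j
        simp only [Finset.mem_filter, Finset.mem_range] at hkmem
        obtain ⟨hk1, hk2⟩ := hkmem
        have hjk : j + k = S := by
          rcases (keyN j k).mp hk2 with h | h
          · exact absurd h hkj
          · exact h
        by_cases hc : 2*j < S
        · exact ⟨j, ⟨hj, by omega, hc⟩, rfl⟩
        · refine ⟨k, ⟨hk1, by omega, by omega⟩, hk2⟩
      · rintro ⟨j, ⟨hj, hjS, hj2⟩, rfl⟩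
        refine ⟨⟨j, hj, rfl⟩, ?_⟩
        rw [pre j hj hjS]
        rw [Finset.card_insert_of_notMem (by simp; omega), Finset.card_singleton]
    rw [himg]
    rw [Finset.card_image_of_injOn]
    · have hIco : J' = Finset.Ico (S - N) ((S + 1) / 2) := by
        ext j
        simp only [hJ', Finset.mem_filter, Finset.mem_range, Finset.mem_Ico]
        omega
      rw [hIco, Nat.card_Ico]
      rcases Nat.even_or_odd i with he | ho
      · rw [if_pos he]
        obtain ⟨m, hm⟩ := he
        omega
      · rw [if_neg (Nat.not_even_iff_odd.mpr ho)]
        obtain ⟨m, hm⟩ := ho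
        omega
    · intro a ha b hb hab
      simp only [hJ', Finset.coe_filter, Finset.mem_range, Set.mem_setOf_eq] at ha hb
      rcases (keyN b a).mp hab with h | h
      · exact h
      · omega
end

section
/- For every integer N ≥ 1 and every k with 1 ≤ k ≤ N-1, the transition matrices of the k-ball Ehrenfest model satisfy the recurrence (k - N)·J_{k+1} = k·J_{k-1} - N·J_1·J_k, where J_1·J_k denotes the matrix product and J_0 is the identity matrix. -/
/-!
Up to the factor `C(N,k)`, the entry `(i, j)` of `J_k` counts the ways to draw `a` of the `m = i`
balls of the first urn and `b` of the `n = N - i` balls of the second, with `a + b = k` and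
`b - a = j - i`. Since `J_1` only moves `i` by `±1`, the recurrence becomes an identity between
these counts. By absorption `m C(m-1,a) = (a+1) C(m,a+1)` and Pascal's rule in the second urn,
`m · c_{k+1}(m-1, n+1)` is the sum of `a C(m,a) C(n,b)` over `a + b = k + 2` plus the sum of
`(m-a) C(m,a) C(n,b)` over `a + b = k`; adding the mirror image for `n` gives
`(k+2) c_{k+2}(m,n) + (m+n-k) c_k(m,n)`.
-/

/-- The transition matrix `J_k` of the `k`-ball Ehrenfest model:
`(J_k)_{i,j} = C(i,k-ℓ)·C(N-i,ℓ)/C(N,k)` whenever `j = i - k + 2ℓ` with `0 ≤ ℓ ≤ k`,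
and zero otherwise. -/
noncomputable def kBall (N k : ℕ) : Matrix (Fin (N + 1)) (Fin (N + 1)) ℝ :=
  fun i j =>
    ∑ ℓ ∈ Finset.range (k + 1),
      if (j : ℤ) = (i : ℤ) - (k : ℤ) + 2 * (ℓ : ℤ) then
        (((i : ℕ).choose (k - ℓ) * (N - (i : ℕ)).choose ℓ : ℕ) : ℝ) / (N.choose k : ℝ)
      else 0

open Finset

/-- The number of ways to draw `k` balls, `a` of them among `m` and `b` among `n`, with
`b - a = d`. -/
def ballCount (m n k : ℕ) (d : ℤ) : ℕ :=
  ∑ p ∈ antidiagonal k, if (p.2 : ℤ) - p.1 = d then m.choose p.1 * n.choose p.2 else 0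

namespace ballCount

theorem swap (m n k : ℕ) (d : ℤ) : ballCount m n k d = ballCount n m k (-d) := by
  rw [ballCount, ballCount, ← Nat.sum_antidiagonal_swap]
  refine sum_congr rfl fun p _ => ?_
  simp only [Prod.fst_swap, Prod.snd_swap, mul_comm (n.choose _)]
  exact if_congr (by omega) rfl rfl

theorem zero (m n : ℕ) (d : ℤ) : ballCount m n 0 d = if d = 0 then 1 else 0 := by
  simp [ballCount, eq_comm]

theorem one (m n : ℕ) (d : ℤ) :
    ballCount m n 1 d = (if d = -1 then m else 0) + (if d = 1 then n else 0) := by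
  simp [ballCount, Nat.antidiagonal_succ, eq_comm, add_comm]

theorem add_one_mul (m n k : ℕ) (d : ℤ) :
    (m + 1) * ballCount m (n + 1) (k + 1) (d + 1) =
      (∑ p ∈ antidiagonal (k + 2), if (p.2 : ℤ) - p.1 = d then
          p.1 * ((m + 1).choose p.1 * n.choose p.2) else 0) +
      ∑ p ∈ antidiagonal k, if (p.2 : ℤ) - p.1 = d then
          (m + 1 - p.1) * ((m + 1).choose p.1 * n.choose p.2) else 0 := by
  rw [ballCount, mul_sum, Nat.sum_antidiagonal_succ', Nat.sum_antidiagonal_succ,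
    Nat.sum_antidiagonal_succ']
  simp only [zero_mul, ite_self, zero_add, Nat.choose_zero_right, mul_one, add_assoc,
    ← sum_add_distrib]
  push_cast
  congr 1
  · rw [mul_ite, mul_zero, Nat.add_one_mul_choose_eq, mul_comm]
    exact if_congr (by omega) rfl rfl
  · refine sum_congr rfl fun ⟨a, b⟩ _ => ?_
    dsimp only
    have hshift : (a + 1) * (m + 1).choose (a + 1) = (m + 1) * m.choose a := by
      rw [Nat.add_one_mul_choose_eq, mul_comm]
    have hstay : (m + 1 - a) * (m + 1).choose a = (m + 1) * m.choose a := by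
      rw [mul_comm, ← Nat.choose_succ_right_eq, mul_comm, hshift]
    by_cases h : (b : ℤ) - a = d
    · rw [if_pos (by omega), if_pos (by omega), if_pos h, ← mul_assoc (a + 1), hshift,
        ← mul_assoc (m + 1 - a), hstay, Nat.choose_succ_succ' n b]
      ring
    · rw [if_neg (by omega), if_neg (by omega), if_neg h, mul_zero, add_zero]

theorem mul_sub_one_left (m n k : ℕ) (d : ℤ) :
    m * ballCount (m - 1) (n + 1) (k + 1) (d + 1) =
      (∑ p ∈ antidiagonal (k + 2), if (p.2 : ℤ) - p.1 = d then
          p.1 * (m.choose p.1 * n.choose p.2) else 0) +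
      ∑ p ∈ antidiagonal k, if (p.2 : ℤ) - p.1 = d then
          (m - p.1) * (m.choose p.1 * n.choose p.2) else 0 := by
  cases m with
  | zero =>
    simp only [zero_tsub, zero_mul, ite_self, sum_const_zero, add_zero]
    exact (sum_eq_zero fun ⟨a, _⟩ _ => by cases a <;> simp).symm
  | succ m => exact add_one_mul m n k d

theorem mul_sub_one_right (m n k : ℕ) (d : ℤ) :
    n * ballCount (m + 1) (n - 1) (k + 1) (d - 1) =
      (∑ p ∈ antidiagonal (k + 2), if (p.2 : ℤ) - p.1 = d then
          p.2 * (m.choose p.1 * n.choose p.2) else 0) +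
      ∑ p ∈ antidiagonal k, if (p.2 : ℤ) - p.1 = d then
          (n - p.2) * (m.choose p.1 * n.choose p.2) else 0 := by
  rw [swap, neg_sub, sub_eq_neg_add, mul_sub_one_left, ← Nat.sum_antidiagonal_swap,
    ← Nat.sum_antidiagonal_swap (n := k)]
  congr 1 <;> refine sum_congr rfl fun p _ => ?_ <;>
    simp only [Prod.fst_swap, Prod.snd_swap, mul_comm (n.choose _)] <;>
    exact if_congr (by omega) rfl rfl

theorem recurrence (m n k : ℕ) (d : ℤ) :
    (k + 2) * ballCount m n (k + 2) d + (m + n - k) * ballCount m n k d =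
      m * ballCount (m - 1) (n + 1) (k + 1) (d + 1) +
        n * ballCount (m + 1) (n - 1) (k + 1) (d - 1) := by
  rw [mul_sub_one_left, mul_sub_one_right, add_add_add_comm, ← sum_add_distrib,
    ← sum_add_distrib, ballCount, ballCount, mul_sum, mul_sum]
  congr 1 <;> refine sum_congr rfl fun ⟨a, b⟩ hab => ?_ <;>
    rw [HasAntidiagonal.mem_antidiagonal] at hab <;> dsimp only at hab ⊢ <;>
    split_ifs <;> try simp only [mul_zero, add_zero]
  · rw [← add_mul, hab]
  · rw [← add_mul]
    rcases le_or_gt a m with ham | ham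
    · rcases le_or_gt b n with hbn | hbn
      · congr 1; omega
      · simp [Nat.choose_eq_zero_of_lt hbn]
    · simp [Nat.choose_eq_zero_of_lt ham]

end ballCount

theorem kBall_apply (N k : ℕ) (i j : Fin (N + 1)) :
    kBall N k i j = ballCount i (N - i) k ((j : ℤ) - i) / N.choose k := by
  have hrange := Nat.sum_antidiagonal_eq_sum_range_succ (fun x y =>
    if (j : ℤ) = i - k + 2 * x then ((i.val.choose y * (N - i).choose x : ℕ) : ℝ) / N.choose k
    else 0) k
  rw [kBall, ← hrange, ballCount, Nat.cast_sum, sum_div, ← Nat.sum_antidiagonal_swap]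
  refine sum_congr rfl fun p hp => ?_
  rw [HasAntidiagonal.mem_antidiagonal] at hp
  push_cast [Prod.fst_swap, Prod.snd_swap, apply_ite (fun x : ℕ => (x : ℝ)), ite_div, zero_div]
  exact if_congr (by omega) rfl rfl

theorem kBall_zero (N : ℕ) : kBall N 0 = 1 := by
  ext i j
  rw [kBall_apply, ballCount.zero, Matrix.one_apply]
  simp [sub_eq_zero, Fin.ext_iff, eq_comm]

theorem kBall_one_mul_apply (N k : ℕ) (i j : Fin (N + 1)) :
    (kBall N 1 * kBall N k) i j =
      (i * ballCount (i - 1) (N - i + 1) k (j - i + 1) +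
        (N - i : ℕ) * ballCount (i + 1) (N - i - 1) k (j - i - 1)) / (N * N.choose k) := by
  rw [Matrix.mul_apply]
  simp_rw [kBall_apply]
  rw [Fin.sum_univ_eq_sum_range (fun m => ballCount i (N - i) 1 (m - i) / N.choose 1 *
    (ballCount m (N - m) k (j - m) / N.choose k : ℝ)) (N + 1)]
  simp only [ballCount.one, Nat.choose_one_right]
  push_cast [apply_ite (fun x : ℕ => (x : ℝ))]
  simp only [add_div, add_mul, sum_add_distrib, ite_div, ite_mul, zero_div, zero_mul]
  obtain ⟨i, hi⟩ := i
  dsimp only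
  congr 1
  · cases i with
    | zero => simp
    | succ i =>
      rw [sum_eq_single_of_mem i (mem_range.2 (by omega)) fun x _ hx => if_neg (by omega),
        if_pos (by push_cast; ring), Nat.add_sub_cancel, show N - (i + 1) + 1 = N - i by omega,
        show (j : ℤ) - (i + 1 : ℕ) + 1 = j - i by push_cast; ring]
      field_simp
  · rcases Nat.lt_or_ge i N with hiN | hiN
    · rw [sum_eq_single_of_mem (i + 1) (mem_range.2 (by omega)) fun x _ hx => if_neg (by omega),
        if_pos (by push_cast; ring), show N - (i + 1) = N - i - 1 by omega,
        show (j : ℤ) - (i + 1 : ℕ) = j - i - 1 by push_cast; ring]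
      field_simp
    · rw [sum_eq_zero fun x hx => if_neg (by rw [mem_range] at hx; omega)]
      simp [show N - i = 0 by omega]

theorem cast_choose_add_one_mul {R : Type*} [Ring R] {n r : ℕ} (h : r ≤ n) :
    (n.choose (r + 1) : R) * (r + 1) = n.choose r * (n - r) := by
  rw [← Nat.cast_sub h, ← Nat.cast_add_one, ← Nat.cast_mul, ← Nat.cast_mul,
    Nat.choose_succ_right_eq]

theorem kBall_recurrence_apply (N K : ℕ) (hK : K + 2 ≤ N) (i j : Fin (N + 1)) :
    ((K : ℝ) + 1 - N) * kBall N (K + 2) i j =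
      (K + 1) * kBall N K i j - N * (kBall N 1 * kBall N (K + 1)) i j := by
  have hrec := congrArg (fun x : ℕ => (x : ℝ)) (ballCount.recurrence i (N - i) K (j - i))
  rw [show i + (N - i) - K = N - K by omega] at hrec
  push_cast [Nat.cast_sub (show K ≤ N by omega)] at hrec
  have hN : (N : ℝ) ≠ 0 := by norm_cast; omega
  have hNK : (N : ℝ) - K ≠ 0 := sub_ne_zero.2 (by norm_cast; omega)
  have hNK1 : (N : ℝ) - K - 1 ≠ 0 := by
    rw [sub_sub, sub_ne_zero]; norm_cast; omega
  have hchoose : (N.choose (K + 1) : ℝ) ≠ 0 := by exact_mod_cast (Nat.choose_pos (by omega)).ne'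
  have hchoose_add_two :
      (N.choose (K + 2) : ℝ) = N.choose (K + 1) * (N - K - 1) / (K + 2) := by
    rw [eq_div_iff (by positivity), sub_sub]
    exact_mod_cast cast_choose_add_one_mul (R := ℝ) (show K + 1 ≤ N by omega)
  have hchoose_self : (N.choose K : ℝ) = N.choose (K + 1) * (K + 1) / (N - K) := by
    rw [eq_div_iff hNK]
    exact (cast_choose_add_one_mul (show K ≤ N by omega)).symm
  rw [kBall_apply, kBall_apply, kBall_one_mul_apply, hchoose_add_two, hchoose_self]
  field_simp
  linear_combination ((K : ℝ) + 1 - N) * hrec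

theorem kBall_recurrence_general (N k : ℕ) (hk : 1 ≤ k) (hkN : k ≤ N - 1) :
    kBall N 0 = 1
    ∧ ((k : ℝ) - (N : ℝ)) • kBall N (k + 1)
      = (k : ℝ) • kBall N (k - 1) - (N : ℝ) • (kBall N 1 * kBall N k) := by
  refine ⟨kBall_zero N, ?_⟩
  obtain ⟨K, rfl⟩ : ∃ K, k = K + 1 := ⟨k - 1, by omega⟩
  ext i j
  simp only [Matrix.sub_apply, Matrix.smul_apply, smul_eq_mul, Nat.add_sub_cancel, Nat.cast_succ]
  exact kBall_recurrence_apply N K (by omega) i j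

/-- the `k`-ball transition matrices satisfy
`(k - N)·J_{k+1} = k·J_{k-1} - N·J_1·J_k` for `1 ≤ k ≤ N-1`, where `J_0` is the
identity matrix. -/
theorem kBall_recurrence (N k : ℕ) (hN : 1 ≤ N) (hk : 1 ≤ k) (hkN : k ≤ N - 1) :
    kBall N 0 = 1
    ∧ ((k : ℝ) - (N : ℝ)) • kBall N (k + 1)
      = (k : ℝ) • kBall N (k - 1) - (N : ℝ) • (kBall N 1 * kBall N k) :=
  kBall_recurrence_general N k hk hkN
end

section
/- For every integer N ≥ 1 and every k with 0 ≤ k ≤ N, the transition matrix of the k-ball Ehrenfest model is a Krawtchouk polynomial evaluated at the classical Ehrenfest matrix: J_k = K_k( -N(J_1 - I)/2 ), i.e., J_k equals the evaluation of the real polynomial x ↦ K_k(-N(x-1)/2) at the matrix J_1, where I is the (N+1)×(N+1) identity matrix and J_1 = M_0 is the tridiagonal matrix with (J_1)_{i,i-1} = i/N and (J_1)_{i,i+1} = (N-i)/N. -/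
open Finset

theorem eq_of_three_term_recurrence {𝕜 M : Type*} [DivisionRing 𝕜] [AddCommGroup M]
    [Module 𝕜 M] {n : ℕ} {a : ℕ → 𝕜} {F : ℕ → M → M → M} {u v : ℕ → M}
    (ha : ∀ j < n, a j ≠ 0)
    (hu : ∀ j < n, a j • u (j + 1) = F j (u j) (u (j - 1)))
    (hv : ∀ j < n, a j • v (j + 1) = F j (v j) (v (j - 1)))
    (h0 : u 0 = v 0) {j : ℕ} (hj : j ≤ n) : u j = v j := by
  induction j using Nat.strong_induction_on with
  | _ j ih =>
    rcases j with _ | j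
    · exact h0
    · refine smul_right_injective M (ha j (by omega)) ?_
      beta_reduce
      rw [hu j (by omega), hv j (by omega), ih j (by omega) (by omega),
        ih (j - 1) (by omega) (by omega)]

theorem Nat.mul_choose_sub_one (n k : ℕ) : n * (n - 1).choose k = n.choose (k + 1) * (k + 1) := by
  cases n with
  | zero => simp
  | succ n => exact Nat.add_one_mul_choose_eq n k

theorem Nat.sub_add_sub_mul_choose_mul_choose (u v a p : ℕ) :
    (u + v - (a + p)) * (u.choose a * v.choose p)
      = (u - a) * u.choose a * v.choose p + (v - p) * v.choose p * u.choose a := by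
  rcases lt_or_ge u a with hua | hau
  · simp [Nat.choose_eq_zero_of_lt hua]
  rcases lt_or_ge v p with hvp | hpv
  · simp [Nat.choose_eq_zero_of_lt hvp]
  rw [show u + v - (a + p) = (u - a) + (v - p) by omega]
  ring

theorem Nat.mul_choose_mul_choose_add_mul_choose_mul_choose (u v a p : ℕ) :
    u * (u - 1).choose a * (v + 1).choose (p + 1) + v * (u + 1).choose (a + 1) * (v - 1).choose p
      = (a + p + 2) * (u.choose (a + 1) * v.choose (p + 1))
        + (u + v - (a + p)) * (u.choose a * v.choose p) := by
  rw [Nat.choose_succ_succ', Nat.choose_succ_succ', Nat.sub_add_sub_mul_choose_mul_choose]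
  linear_combination (v.choose p + v.choose (p + 1)) * Nat.mul_choose_sub_one u a
    + (u.choose a + u.choose (a + 1)) * Nat.mul_choose_sub_one v p
    + v.choose p * Nat.choose_succ_right_eq u a + u.choose a * Nat.choose_succ_right_eq v p

/-- `a` of the `k` moved balls leave the first urn and `p` enter it. -/
def kBallCount (N k i j : ℕ) : ℕ :=
  ∑ ap ∈ antidiagonal k, if j + ap.1 = i + ap.2 then i.choose ap.1 * (N - i).choose ap.2 else 0

def kBallCountMatrix (N k : ℕ) : Matrix (Fin (N + 1)) (Fin (N + 1)) ℕ :=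
  Matrix.of fun i j => kBallCount N k i j

section kBallCount

variable {N k i j : ℕ}

theorem kBallCount_eq {a p : ℕ} (hk : a + p = k) (h : j + a = i + p) :
    kBallCount N k i j = i.choose a * (N - i).choose p := by
  rw [kBallCount, sum_eq_single (a, p)]
  · rw [if_pos h]
  · rintro ⟨a', p'⟩ hap hne
    rw [Finset.HasAntidiagonal.mem_antidiagonal] at hap
    refine if_neg fun h' => hne ?_
    simp only [Prod.mk.injEq]
    omega
  · simp [hk]

theorem kBallCount_eq_zero (h : ∀ a p, a + p = k → j + a ≠ i + p) : kBallCount N k i j = 0 :=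
  sum_eq_zero fun ap hap =>
    if_neg (h ap.1 ap.2 (Finset.HasAntidiagonal.mem_antidiagonal.mp hap))

theorem kBallCount_one (N i j : ℕ) :
    kBallCount N 1 i j = (if i = j + 1 then i else 0) + (if j = i + 1 then N - i else 0) := by
  simp [kBallCount, Nat.sum_antidiagonal_succ, add_comm, eq_comm]

theorem sum_kBallCount_one_mul (hi : i ≤ N) (f : ℕ → ℕ) :
    ∑ x ∈ range (N + 1), kBallCount N 1 i x * f x = i * f (i - 1) + (N - i) * f (i + 1) := by
  simp only [kBallCount_one, add_mul, ite_mul, zero_mul, sum_add_distrib]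
  congr 1
  · cases i with
    | zero => simp
    | succ i =>
      simp only [Nat.add_right_cancel_iff, sum_ite_eq, mem_range, Nat.add_sub_cancel]
      rw [if_pos (by omega)]
  · rw [sum_ite_eq']
    split_ifs with h
    · rfl
    · rw [show N - i = 0 by rw [mem_range] at h; omega, zero_mul]

theorem kBallCount_rec (hi : i ≤ N) (m j : ℕ) :
    i * kBallCount N (m + 1) (i - 1) j + (N - i) * kBallCount N (m + 1) (i + 1) j
      = (m + 2) * kBallCount N (m + 2) i j + (N - m) * kBallCount N m i j := by
  by_cases h : ∃ a p, a + p = m + 2 ∧ j + a = i + p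
  · obtain ⟨a, p, hk, hj⟩ := h
    rcases a with _ | a <;> rcases p with _ | p
    · omega
    · obtain rfl : p = m + 1 := by omega
      rw [kBallCount_eq_zero (by omega), kBallCount_eq (by omega : 0 + (m + 1) = _) (by omega),
        kBallCount_eq hk hj, kBallCount_eq_zero (by omega), show N - (i + 1) = N - i - 1 by omega]
      simp only [Nat.choose_zero_right]
      linear_combination Nat.mul_choose_sub_one (N - i) (m + 1)
    · obtain rfl : a = m + 1 := by omega
      rw [kBallCount_eq (by omega : (m + 1) + 0 = _) (by omega), kBallCount_eq_zero (by omega),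
        kBallCount_eq hk hj, kBallCount_eq_zero (by omega)]
      simp only [Nat.choose_zero_right]
      linear_combination Nat.mul_choose_sub_one i (m + 1)
    · obtain rfl : m = a + p := by omega
      -- at `i = 0` the row `i - 1` is truncated, but the factor `i` kills it
      have hpred : i * kBallCount N (a + p + 1) (i - 1) j
          = i * ((i - 1).choose a * (N - i + 1).choose (p + 1)) := by
        rcases Nat.eq_zero_or_pos i with rfl | hi0
        · simp
        · rw [kBallCount_eq (by omega : a + (p + 1) = _) (by omega),
            show N - (i - 1) = N - i + 1 by omega]
      rw [hpred, kBallCount_eq (by omega : (a + 1) + p = _) (by omega), kBallCount_eq hk hj,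
        kBallCount_eq rfl (by omega), show N - (i + 1) = N - i - 1 by omega,
        show N - (a + p) = i + (N - i) - (a + p) by omega]
      linear_combination Nat.mul_choose_mul_choose_add_mul_choose_mul_choose i (N - i) a p
  · push Not at h
    have hpred : i * kBallCount N (m + 1) (i - 1) j = 0 := by
      rcases Nat.eq_zero_or_pos i with rfl | hi0
      · simp
      · rw [kBallCount_eq_zero fun a p hap hj' => h (a + 1) p (by omega) (by omega), mul_zero]
    rw [hpred, kBallCount_eq_zero fun a p hap hj' => h a (p + 1) (by omega) (by omega),
      kBallCount_eq_zero fun a p hap hj' => h a p hap hj',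
      kBallCount_eq_zero fun a p hap hj' => h (a + 1) (p + 1) (by omega) (by omega)]
    simp

end kBallCount

theorem kBallCountMatrix_one_mul (N m : ℕ) :
    kBallCountMatrix N 1 * kBallCountMatrix N (m + 1)
      = (m + 2) • kBallCountMatrix N (m + 2) + (N - m) • kBallCountMatrix N m := by
  ext i j
  simp only [Matrix.mul_apply, kBallCountMatrix, Matrix.of_apply, Matrix.add_apply,
    Matrix.smul_apply, smul_eq_mul]
  rw [Fin.sum_univ_eq_sum_range (fun x => kBallCount N 1 i x * kBallCount N (m + 1) x j),
    sum_kBallCount_one_mul i.is_le]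
  exact kBallCount_rec i.is_le m j

theorem kBall_eq_smul_kBallCountMatrix (N k : ℕ) :
    kBall N k = (N.choose k : ℝ)⁻¹ • (kBallCountMatrix N k).map Nat.cast := by
  ext i j
  rw [Matrix.smul_apply, Matrix.map_apply, kBallCountMatrix, Matrix.of_apply, kBallCount,
    ← Finset.Nat.sum_antidiagonal_swap]
  simp only [Prod.fst_swap, Prod.snd_swap]
  rw [Finset.Nat.sum_antidiagonal_eq_sum_range_succ
      (fun p a : ℕ => if (j : ℕ) + a = i + p then (i : ℕ).choose a * (N - i).choose p else 0)]
  simp only [kBall, smul_eq_mul, Nat.cast_sum, Finset.mul_sum, Nat.cast_ite, Nat.cast_zero,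
    mul_ite, mul_zero]
  refine sum_congr rfl fun ℓ hℓ => if_congr ?_ (by rw [div_eq_inv_mul]) rfl
  rw [mem_range] at hℓ
  omega

theorem smul_kBall_one_mul_kBall {N m : ℕ} (hm : m + 2 ≤ N) :
    (N : ℝ) • (kBall N 1 * kBall N (m + 1))
      = ((N : ℝ) - (m + 1)) • kBall N (m + 2) + ((m : ℝ) + 1) • kBall N m := by
  set A : ℕ → Matrix (Fin (N + 1)) (Fin (N + 1)) ℝ :=
    fun k => (kBallCountMatrix N k).map Nat.cast
  have hA : ∀ k ≤ N, A k = (N.choose k : ℝ) • kBall N k := fun k hk => by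
    rw [kBall_eq_smul_kBallCountMatrix, smul_smul,
      mul_inv_cancel₀ (Nat.cast_ne_zero.2 (Nat.choose_pos hk).ne'), one_smul]
  have hrec : A 1 * A (m + 1) = ((m : ℝ) + 2) • A (m + 2) + ((N - m : ℕ) : ℝ) • A m := by
    ext i j
    have := congrFun₂ (kBallCountMatrix_one_mul N m) i j
    simp only [Matrix.mul_apply, Matrix.add_apply, Matrix.smul_apply, smul_eq_mul] at this
    simp only [A, Matrix.mul_apply, Matrix.add_apply, Matrix.smul_apply, Matrix.map_apply,
      smul_eq_mul]
    exact_mod_cast this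
  have e2 : ((N.choose (m + 2) * (m + 2) : ℕ) : ℝ) = (N.choose (m + 1) * (N - (m + 1)) : ℕ) :=
    congrArg _ (Nat.choose_succ_right_eq N (m + 1))
  have e0 : ((N.choose (m + 1) * (m + 1) : ℕ) : ℝ) = (N.choose m * (N - m) : ℕ) :=
    congrArg _ (Nat.choose_succ_right_eq N m)
  push_cast [Nat.cast_sub (by omega : m + 1 ≤ N), Nat.cast_sub (by omega : m ≤ N)] at e2 e0
  have hC : (N.choose (m + 1) : ℝ) ≠ 0 := Nat.cast_ne_zero.2 (Nat.choose_pos (by omega)).ne'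
  apply smul_right_injective _ hC
  calc (N.choose (m + 1) : ℝ) • (N : ℝ) • (kBall N 1 * kBall N (m + 1))
        = A 1 * A (m + 1) := by
        rw [hA 1 (by omega), hA (m + 1) (by omega), Nat.choose_one_right, Matrix.smul_mul,
          Matrix.mul_smul, smul_comm]
    _ = ((m : ℝ) + 2) • A (m + 2) + ((N - m : ℕ) : ℝ) • A m := hrec
    _ = _ := by
      rw [hA (m + 2) hm, hA m (by omega), Nat.cast_sub (by omega : m ≤ N)]
      linear_combination (norm := module) e2 • kBall N (m + 2) - e0 • kBall N m

theorem kBall_krawtchouk_rec {N j : ℕ} (hj : j < N) :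
    (((N : ℝ) - j) / 2) • kBall N (j + 1)
      = -(((-(N : ℝ) / 2) • (kBall N 1 - 1)) * kBall N j) + ((N : ℝ) / 2) • kBall N j
        - ((j : ℝ) / 2) • kBall N (j - 1) := by
  rw [Matrix.smul_mul, sub_mul, one_mul]
  rcases j with _ | m
  · simp only [kBall_zero, mul_one]
    module
  · have h := smul_kBall_one_mul_kBall (show m + 2 ≤ N by omega)
    rw [show m + 1 + 1 = m + 2 from rfl, Nat.add_sub_cancel]
    push_cast
    linear_combination (norm := module) (-1 / 2 : ℝ) • h

theorem kBall_eq_krawtchouk_of_oneBall_general (N : ℕ)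
    (K : ℕ → Polynomial ℝ) (hK0 : K 0 = 1)
    (hKrec : ∀ j < N,
      -(Polynomial.X * K j) =
        Polynomial.C (((N : ℝ) - (j : ℕ)) / 2) * K (j + 1)
          - Polynomial.C ((N : ℝ) / 2) * K j
          + Polynomial.C ((j : ℝ) / 2) * K (j - 1))
    (k : ℕ) (hk : k ≤ N) :
    kBall N k
      = Polynomial.aeval (kBall N 1)
          ((K k).comp (Polynomial.C (-(N : ℝ) / 2) * (Polynomial.X - 1))) := by
  have hB : Polynomial.aeval (kBall N 1) (Polynomial.C (-(N : ℝ) / 2) * (Polynomial.X - 1))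
      = (-(N : ℝ) / 2) • (kBall N 1 - 1) := by
    simp [Algebra.smul_def]
  rw [Polynomial.aeval_comp, hB]
  set B := (-(N : ℝ) / 2) • (kBall N 1 - 1)
  refine eq_of_three_term_recurrence (a := fun j => ((N : ℝ) - j) / 2)
    (F := fun j x y => -(B * x) + ((N : ℝ) / 2) • x - ((j : ℝ) / 2) • y)
    (v := fun j => Polynomial.aeval B (K j))
    (fun j hj => ?_) (fun j hj => kBall_krawtchouk_rec hj) (fun j hj => ?_) ?_ hk
  · have : (j : ℝ) < N := by exact_mod_cast hj
    exact div_ne_zero (sub_ne_zero.2 this.ne') two_ne_zero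
  · have h := congrArg (Polynomial.aeval B) (hKrec j hj)
    simp only [map_neg, map_mul, map_sub, map_add, Polynomial.aeval_X, Polynomial.aeval_C,
      Algebra.algebraMap_eq_smul_one, smul_mul_assoc, one_mul] at h
    rw [h]
    abel
  · rw [hK0, map_one, kBall_zero]

/-- `J_k = K_k(-N(J_1 - I)/2)`, i.e. `J_k` is the evaluation of the
real polynomial `x ↦ K_k(-N(x-1)/2)` at the matrix `J_1 = M_0`, where `K_k` are the
Krawtchouk polynomials. -/
theorem kBall_eq_krawtchouk_of_oneBall (N : ℕ) (hN : 1 ≤ N)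
    (K : ℕ → Polynomial ℝ) (hK0 : K 0 = 1)
    (hKrec : ∀ j < N,
      -(Polynomial.X * K j) =
        Polynomial.C (((N : ℝ) - (j : ℕ)) / 2) * K (j + 1)
          - Polynomial.C ((N : ℝ) / 2) * K j
          + Polynomial.C ((j : ℝ) / 2) * K (j - 1))
    (k : ℕ) (hk : k ≤ N) :
    kBall N k
      = Polynomial.aeval (kBall N 1)
          ((K k).comp (Polynomial.C (-(N : ℝ) / 2) * (Polynomial.X - 1))) :=
  kBall_eq_krawtchouk_of_oneBall_general N K hK0 hKrec k hk
end

section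
/- For every integer N ≥ 1, every k with 0 ≤ k ≤ N, and every j ∈ {0, 1, ..., N}, the vector 𝐩(j) = (K_0(j), K_1(j), ..., K_N(j))ᵀ is an eigenvector of J_k with eigenvalue K_k(j): J_k · 𝐩(j) = K_k(j) · 𝐩(j). -/
/-!
Read `{0, …, N}` as the Hamming weights of the subsets of an `N`-set. Then `J_k` averages a
function of the weight over the sphere `{U ∆ T : #T = k}` around a set `U` of weight `i`, and
`K_m(x)` is the average of the character `T ↦ (-1) ^ #(S ∩ T)` over `#T = m`, for any `S` of
weight `x`. Krawtchouk duality `K_m(x) = K_x(m)`, a double count, writes `K_{#W}(x)` as an average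
of characters evaluated at `W` instead. Characters are multiplicative under `∆`, so averaging
`T ↦ (-1) ^ #(S ∩ (U ∆ T))` over `#T = k` multiplies `(-1) ^ #(S ∩ U)` by `K_k(x)`: this is the
eigenvalue equation. For `k = 1` it is the three-term recurrence, which pins down the `K` of the
statement.
-/

open Finset
open scoped symmDiff

/-- `krawtchouk n m x` is `K_m(x)`, normalised by `K_m(0) = 1`, and
`krawtchoukNum n m x = C(n, m) K_m(x)` is the coefficient of `t ^ m` in
`(1 - t) ^ x * (1 + t) ^ (n - x)`. -/
def krawtchoukNum (n m x : ℕ) : ℝ :=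
  ∑ a ∈ range (m + 1), ((x.choose a * (n - x).choose (m - a) : ℕ) : ℝ) * (-1) ^ a

noncomputable def krawtchouk (n m x : ℕ) : ℝ :=
  krawtchoukNum n m x / n.choose m

theorem krawtchouk_zero (n x : ℕ) : krawtchouk n 0 x = 1 := by
  simp [krawtchouk, krawtchoukNum]

theorem krawtchouk_one {n x : ℕ} (hx : x ≤ n) : krawtchouk n 1 x = ((n : ℝ) - 2 * x) / n := by
  simp only [krawtchouk, krawtchoukNum, sum_range_succ, range_one, sum_singleton,
    Nat.choose_zero_right, Nat.choose_one_right, Nat.cast_mul, Nat.cast_one, Nat.cast_sub hx,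
    tsub_zero, tsub_self, Nat.reduceAdd, one_mul, mul_one, pow_zero, pow_one, mul_neg]
  ring

section Hypercube

variable {α : Type*} [Fintype α] [DecidableEq α]

theorem card_filter_powersetCard_card_inter (U : Finset α) {a k : ℕ} (hak : a ≤ k) :
    #{T ∈ powersetCard k univ | #(U ∩ T) = a}
      = (#U).choose a * (Fintype.card α - #U).choose (k - a) := by
  rw [← card_compl, ← card_powersetCard, ← card_powersetCard, ← card_product]
  symm
  refine card_nbij' (fun p => p.1 ∪ p.2) (fun T => (U ∩ T, T \ U)) ?_ ?_ ?_ ?_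
  · rintro ⟨A, B⟩ hAB
    simp only [coe_product, Set.mem_prod, mem_coe, mem_powersetCard,
      subset_compl_iff_disjoint_right] at hAB
    obtain ⟨⟨hAU, hA⟩, hBU, hB⟩ := hAB
    simp only [coe_filter, mem_powersetCard, Set.mem_ofPred_eq, subset_univ, true_and]
    refine ⟨by rw [card_union_of_disjoint (disjoint_of_subset_left hAU hBU.symm)]; omega, ?_⟩
    rw [inter_union_distrib_left, inter_eq_right.mpr hAU,
      disjoint_iff_inter_eq_empty.mp hBU.symm, union_empty, hA]
  · intro T hT
    simp only [coe_filter, mem_powersetCard, Set.mem_ofPred_eq, subset_univ, true_and] at hT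
    simp only [coe_product, Set.mem_prod, mem_coe, mem_powersetCard, inter_subset_left, true_and,
      subset_compl_iff_disjoint_right, sdiff_disjoint]
    have := card_inter_add_card_sdiff T U
    rw [inter_comm] at this
    omega
  · rintro ⟨A, B⟩ hAB
    simp only [coe_product, Set.mem_prod, mem_coe, mem_powersetCard,
      subset_compl_iff_disjoint_right] at hAB
    obtain ⟨⟨hAU, -⟩, hBU, -⟩ := hAB
    simp only [Prod.mk.injEq, inter_union_distrib_left, inter_eq_right.mpr hAU,
      disjoint_iff_inter_eq_empty.mp hBU.symm, union_empty, union_sdiff_distrib,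
      sdiff_eq_empty_iff_subset.mpr hAU, empty_union, true_and]
    exact hBU.sdiff_eq_left
  · intro T _
    simp only
    rw [inter_comm, union_comm, sdiff_union_inter]

theorem sum_powersetCard_comp_card_inter {M : Type*} [AddCommMonoid M] (U : Finset α) (k : ℕ)
    (g : ℕ → M) :
    ∑ T ∈ powersetCard k univ, g #(U ∩ T)
      = ∑ a ∈ range (k + 1), ((#U).choose a * (Fintype.card α - #U).choose (k - a)) • g a := by
  rw [← sum_fiberwise_of_maps_to (t := range (k + 1)) (g := fun T => #(U ∩ T))]
  · refine sum_congr rfl fun a ha => ?_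
    rw [sum_congr rfl fun T hT => congrArg g (mem_filter.mp hT).2, sum_const,
      card_filter_powersetCard_card_inter U (Nat.lt_succ_iff.mp (mem_range.mp ha))]
  · intro T hT
    rw [mem_range, Nat.lt_succ_iff, ← (mem_powersetCard.mp hT).2]
    exact card_le_card inter_subset_right

theorem card_symmDiff_add_two_mul_card_inter (U T : Finset α) :
    #(U ∆ T) + 2 * #(U ∩ T) = #U + #T := by
  have hunion : U ∆ T ∪ U ∩ T = U ∪ T := symmDiff_sup_inf U T
  have hdisj : Disjoint (U ∆ T) (U ∩ T) := disjoint_symmDiff_inf U T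
  rw [← card_union_add_card_inter, ← hunion, card_union_of_disjoint hdisj]
  ring

theorem sum_powersetCard_comp_card_symmDiff {M : Type*} [AddCommMonoid M] (U : Finset α) (k : ℕ)
    (f : ℕ → M) :
    ∑ T ∈ powersetCard k univ, f #(U ∆ T)
      = ∑ a ∈ range (k + 1),
          ((#U).choose a * (Fintype.card α - #U).choose (k - a)) • f (#U + k - 2 * a) := by
  rw [← sum_powersetCard_comp_card_inter]
  refine sum_congr rfl fun T hT => congrArg f ?_
  have := card_symmDiff_add_two_mul_card_inter U T
  rw [(mem_powersetCard.mp hT).2] at this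
  omega

theorem neg_one_pow_card_inter_symmDiff {R : Type*} [Monoid R] [HasDistribNeg R]
    (S U T : Finset α) :
    (-1 : R) ^ #(S ∩ (U ∆ T)) = (-1) ^ #(S ∩ U) * (-1) ^ #(S ∩ T) := by
  have hdistrib : S ∩ (U ∆ T) = (S ∩ U) ∆ (S ∩ T) := inf_symmDiff_distrib_left S U T
  rw [← pow_add, ← card_symmDiff_add_two_mul_card_inter, hdistrib, pow_add,
    pow_mul, neg_one_sq, one_pow, mul_one]

theorem sum_powersetCard_neg_one_pow_card_inter (S : Finset α) (m : ℕ) :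
    ∑ T ∈ powersetCard m univ, (-1 : ℝ) ^ #(S ∩ T) = krawtchoukNum (Fintype.card α) m #S := by
  simp only [sum_powersetCard_comp_card_inter S m (fun a => (-1 : ℝ) ^ a), nsmul_eq_mul,
    krawtchoukNum]

theorem choose_mul_krawtchoukNum_comm (n m x : ℕ) :
    n.choose x * krawtchoukNum n m x = n.choose m * krawtchoukNum n x m := by
  have hsum (m x : ℕ) : ∑ S ∈ powersetCard x (univ : Finset (Fin n)),
      ∑ T ∈ powersetCard m univ, (-1 : ℝ) ^ #(S ∩ T) = n.choose x * krawtchoukNum n m x := by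
    rw [sum_congr rfl fun S hS => by
      rw [sum_powersetCard_neg_one_pow_card_inter, Fintype.card_fin, (mem_powersetCard.mp hS).2],
      sum_const, card_powersetCard, card_univ, Fintype.card_fin, nsmul_eq_mul]
  rw [← hsum, ← hsum, sum_comm]
  simp only [inter_comm]

theorem krawtchouk_comm {n m x : ℕ} (hm : m ≤ n) (hx : x ≤ n) :
    krawtchouk n m x = krawtchouk n x m := by
  have hm' : (n.choose m : ℝ) ≠ 0 := Nat.cast_ne_zero.mpr (Nat.choose_pos hm).ne'
  have hx' : (n.choose x : ℝ) ≠ 0 := Nat.cast_ne_zero.mpr (Nat.choose_pos hx).ne'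
  rw [krawtchouk, krawtchouk, div_eq_div_iff hm' hx', mul_comm, choose_mul_krawtchoukNum_comm,
    mul_comm]

theorem krawtchouk_card_right_eq_sum {n : ℕ} (hn : Fintype.card α = n) (S : Finset α) (m : ℕ) :
    krawtchouk n m #S = (n.choose m : ℝ)⁻¹ * ∑ T ∈ powersetCard m univ, (-1 : ℝ) ^ #(S ∩ T) := by
  rw [sum_powersetCard_neg_one_pow_card_inter, hn, krawtchouk, div_eq_inv_mul]

theorem krawtchouk_card_left_eq_sum {n : ℕ} (hn : Fintype.card α = n) (W : Finset α) {x : ℕ}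
    (hx : x ≤ n) :
    krawtchouk n #W x = (n.choose x : ℝ)⁻¹ * ∑ S ∈ powersetCard x univ, (-1 : ℝ) ^ #(S ∩ W) := by
  simp only [inter_comm _ W]
  rw [← krawtchouk_card_right_eq_sum hn W, krawtchouk_comm (hn ▸ card_le_univ W) hx]

theorem inv_choose_mul_sum_powersetCard_krawtchouk_card_symmDiff {n : ℕ}
    (hn : Fintype.card α = n) (U : Finset α) (k : ℕ) {x : ℕ} (hx : x ≤ n) :
    (n.choose k : ℝ)⁻¹ * ∑ T ∈ powersetCard k univ, krawtchouk n #(U ∆ T) x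
      = krawtchouk n k x * krawtchouk n #U x := by
  calc (n.choose k : ℝ)⁻¹ * ∑ T ∈ powersetCard k univ, krawtchouk n #(U ∆ T) x
      = (n.choose x : ℝ)⁻¹ * ∑ S ∈ powersetCard x univ, (-1 : ℝ) ^ #(S ∩ U) *
          ((n.choose k : ℝ)⁻¹ * ∑ T ∈ powersetCard k univ, (-1 : ℝ) ^ #(S ∩ T)) := by
        simp only [krawtchouk_card_left_eq_sum hn _ hx, neg_one_pow_card_inter_symmDiff, mul_sum]
        rw [sum_comm]
        exact sum_congr rfl fun S _ => sum_congr rfl fun T _ => by ring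
    _ = (n.choose x : ℝ)⁻¹ * ∑ S ∈ powersetCard x univ, (-1 : ℝ) ^ #(S ∩ U) * krawtchouk n k x := by
        refine congrArg _ (sum_congr rfl fun S hS => ?_)
        rw [← (mem_powersetCard.mp hS).2, krawtchouk_card_right_eq_sum hn]
    _ = krawtchouk n k x * krawtchouk n #U x := by
        rw [← sum_mul, krawtchouk_card_left_eq_sum hn _ hx]
        ring

end Hypercube

theorem kBall_summand_mulVec_apply {n : ℕ} (i : Fin (n + 1)) {k ℓ : ℕ} (hℓk : ℓ ≤ k)
    (f : ℕ → ℝ) :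
    ∑ y : Fin (n + 1), (if (y : ℤ) = (i : ℤ) - k + 2 * ℓ then
        (((i : ℕ).choose (k - ℓ) * (n - i).choose ℓ : ℕ) : ℝ) / n.choose k else 0) * f y
      = (((i : ℕ).choose (k - ℓ) * (n - i).choose ℓ : ℕ) : ℝ) / n.choose k * f (i + 2 * ℓ - k) := by
  -- the column `i - k + 2ℓ` falls outside `[0, n]` only when the coefficient vanishes
  by_cases hc : (i : ℕ).choose (k - ℓ) * (n - i).choose ℓ = 0
  · simp [hc]
  obtain ⟨hki, hℓ⟩ : k - ℓ ≤ i ∧ ℓ ≤ n - i := by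
    simpa [Nat.choose_eq_zero_iff, not_or, not_lt] using hc
  have hi := i.isLt
  have hy : ∀ y : Fin (n + 1), (y : ℤ) = (i : ℤ) - k + 2 * ℓ ↔ y = ⟨i + 2 * ℓ - k, by omega⟩ := by
    intro y; simp only [Fin.ext_iff]; omega
  simp only [hy, ite_mul, zero_mul, sum_ite_eq', mem_univ, if_true]

theorem kBall_mulVec_apply (n k : ℕ) (f : ℕ → ℝ) (i : Fin (n + 1)) :
    (kBall n k).mulVec (fun y => f y) i
      = ∑ a ∈ range (k + 1),
          (((i : ℕ).choose a * (n - i).choose (k - a) : ℕ) : ℝ) / n.choose k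
            * f (i + k - 2 * a) := by
  simp only [Matrix.mulVec, dotProduct, kBall, sum_mul]
  rw [sum_comm, sum_congr rfl fun ℓ hℓ =>
    kBall_summand_mulVec_apply i (Nat.lt_succ_iff.mp (mem_range.mp hℓ)) f,
    ← sum_range_reflect]
  refine sum_congr rfl fun a ha => ?_
  have ha : a ≤ k := Nat.lt_succ_iff.mp (mem_range.mp ha)
  rw [show k + 1 - 1 - a = k - a by omega, show k - (k - a) = a by omega,
    show (i : ℕ) + 2 * (k - a) - k = i + k - 2 * a by omega]

theorem kBall_mulVec_krawtchouk {n k x : ℕ} (hx : x ≤ n) :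
    (kBall n k).mulVec (fun i => krawtchouk n i x)
      = krawtchouk n k x • fun i : Fin (n + 1) => krawtchouk n i x := by
  ext i
  obtain ⟨U, -, hU⟩ := exists_subset_card_eq (s := (univ : Finset (Fin n))) (n := i)
    (by simpa using Nat.lt_succ_iff.mp i.2)
  have sphere_avg :=
    inv_choose_mul_sum_powersetCard_krawtchouk_card_symmDiff (Fintype.card_fin n) U k hx
  rw [sum_powersetCard_comp_card_symmDiff U k (krawtchouk n · x), mul_sum] at sphere_avg
  simp only [Fintype.card_fin, hU, nsmul_eq_mul] at sphere_avg
  rw [kBall_mulVec_apply n k (krawtchouk n · x), Pi.smul_apply, smul_eq_mul, ← sphere_avg]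
  refine sum_congr rfl fun a _ => ?_
  push_cast
  ring

theorem krawtchouk_three_term {n i x : ℕ} (hi : i < n) (hx : x ≤ n) :
    ((n : ℝ) - i) * krawtchouk n (i + 1) x + i * krawtchouk n (i - 1) x
      = ((n : ℝ) - 2 * x) * krawtchouk n i x := by
  have h := congrFun (kBall_mulVec_krawtchouk (k := 1) hx) ⟨i, by omega⟩
  rw [kBall_mulVec_apply n 1 (krawtchouk n · x)] at h
  have hn : (n : ℝ) ≠ 0 := by exact_mod_cast (by omega : n ≠ 0)
  simp only [sum_range_succ, range_one, sum_singleton, Nat.choose_zero_right,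
    Nat.choose_one_right, Nat.cast_mul, Nat.cast_one, Nat.cast_sub hi.le, tsub_zero, tsub_self,
    one_mul, mul_one, mul_zero, Nat.reduceSubDiff, Nat.reduceAdd, krawtchouk_one hx,
    Pi.smul_apply, smul_eq_mul] at h
  field_simp at h
  linear_combination h

theorem eq_krawtchouk_of_three_term {n x : ℕ} (hx : x ≤ n) {u : ℕ → ℝ} (h0 : u 0 = 1)
    (hrec : ∀ i < n, ((n : ℝ) - i) * u (i + 1) + i * u (i - 1) = ((n : ℝ) - 2 * x) * u i) :
    ∀ i ≤ n, u i = krawtchouk n i x := by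
  suffices ∀ i ≤ n, u i = krawtchouk n i x ∧ u (i - 1) = krawtchouk n (i - 1) x from
    fun i hi => (this i hi).1
  intro i
  induction i with
  | zero => intro _; simp [h0, krawtchouk_zero]
  | succ i ih =>
    intro hi
    obtain ⟨hu, hu'⟩ := ih (by omega)
    refine ⟨?_, hu⟩
    have hni : (n : ℝ) - i ≠ 0 := sub_ne_zero.mpr (by exact_mod_cast (by omega : n ≠ i))
    apply mul_left_cancel₀ hni
    linear_combination hrec i (by omega) - krawtchouk_three_term (i := i) (by omega) hx
      - (i : ℝ) * hu' + ((n : ℝ) - 2 * x) * hu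

theorem kBall_krawtchouk_eigenvector_general (N : ℕ)
    (K : ℕ → Polynomial ℝ) (hK0 : K 0 = 1)
    (hKrec : ∀ j < N,
      -(Polynomial.X * K j) =
        Polynomial.C (((N : ℝ) - (j : ℕ)) / 2) * K (j + 1)
          - Polynomial.C ((N : ℝ) / 2) * K j
          + Polynomial.C ((j : ℝ) / 2) * K (j - 1))
    (k j : ℕ) (hk : k ≤ N) (hj : j ≤ N) :
    (kBall N k).mulVec (fun i : Fin (N + 1) => (K (i : ℕ)).eval (j : ℝ))
      = ((K k).eval (j : ℝ)) • (fun i : Fin (N + 1) => (K (i : ℕ)).eval (j : ℝ)) := by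
  have hval : ∀ i ≤ N, (K i).eval (j : ℝ) = krawtchouk N i j := by
    refine eq_krawtchouk_of_three_term hj (by simp [hK0]) fun i hi => ?_
    have h := congrArg (Polynomial.eval (j : ℝ)) (hKrec i hi)
    simp only [Polynomial.eval_neg, Polynomial.eval_mul, Polynomial.eval_X, Polynomial.eval_add,
      Polynomial.eval_sub, Polynomial.eval_C] at h
    linear_combination -2 * h
  have hvec :
      (fun i : Fin (N + 1) => (K i).eval (j : ℝ)) = fun i : Fin (N + 1) => krawtchouk N i j :=
    funext fun i => hval i (Nat.lt_succ_iff.mp i.2)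
  rw [hvec, hval k hk]
  exact kBall_mulVec_krawtchouk hj

/-- for `0 ≤ k ≤ N` and `j ∈ {0,…,N}`, the vector
`𝐩(j) = (K_0(j),…,K_N(j))ᵀ` is an eigenvector of `J_k` with eigenvalue `K_k(j)`. -/
theorem kBall_krawtchouk_eigenvector (N : ℕ) (hN : 1 ≤ N)
    (K : ℕ → Polynomial ℝ) (hK0 : K 0 = 1)
    (hKrec : ∀ j < N,
      -(Polynomial.X * K j) =
        Polynomial.C (((N : ℝ) - (j : ℕ)) / 2) * K (j + 1)
          - Polynomial.C ((N : ℝ) / 2) * K j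
          + Polynomial.C ((j : ℝ) / 2) * K (j - 1))
    (k j : ℕ) (hk : k ≤ N) (hj : j ≤ N) :
    (kBall N k).mulVec (fun i : Fin (N + 1) => (K (i : ℕ)).eval (j : ℝ))
      = ((K k).eval (j : ℝ)) • (fun i : Fin (N + 1) => (K (i : ℕ)).eval (j : ℝ)) :=
  kBall_krawtchouk_eigenvector_general N K hK0 hKrec k j hk hj
end
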